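/- arXiv:2106.03402 — 7 statements merged into one kernel-verified Lean document; each statement's English description precedes it below -/
import Mathlib

section
/- Let q = 2^(2r+1) with r ≥ 1 and let σ be the field automorphism x ↦ x^(2^(r+1)) of F_q (so x^(σ∘σ) = x^2). For any a₁₁, a₃₃, a₄₄ ∈ F_q with a₃₃ ≠ 0 and a₄₄ ≠ 0, the equation a₁₁ + a₃₃ x² + a₄₄ x^(2σ) + x^σ = 0 has at most four solutions x ∈ F_q, where x^(2σ) denotes (x^σ)². -/
/-- For `q = 2^(2r+1)`, `r ≥ 1`, `σ(x) = x^(2^(r+1))`, and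
`a₁₁, a₃₃, a₄₄ ∈ F_q` with `a₃₃ ≠ 0`, `a₄₄ ≠ 0`, the equation
`a₁₁ + a₃₃ x² + a₄₄ (x^σ)² + x^σ = 0` has at most four solutions. -/
theorem stmt0 (F : Type*) [Field F] [Fintype F] (r : ℕ) (hr : 1 ≤ r)
    (hq : Fintype.card F = 2 ^ (2 * r + 1)) (a11 a33 a44 : F)
    (h33 : a33 ≠ 0) (h44 : a44 ≠ 0) :
    Set.ncard {x : F |
      a11 + a33 * x ^ 2 + a44 * (x ^ 2 ^ (r + 1)) ^ 2 + x ^ 2 ^ (r + 1) = 0} ≤ 4 := by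
  classical
  have hcp : CharP F (ringChar F) := ringChar.charP F
  haveI hchar : CharP F 2 := by
    obtain ⟨n, hp, hcard⟩ := FiniteField.card F (ringChar F)
    have hdvd : ringChar F ∣ 2 ^ (2 * r + 1) := hq ▸ hcard ▸ dvd_pow_self _ n.ne_zero
    have : ringChar F = 2 :=
      (Nat.prime_dvd_prime_iff_eq hp Nat.prime_two).mp (hp.dvd_of_dvd_pow hdvd)
    exact this ▸ hcp
  haveI hfact : Fact (Nat.Prime 2) := ⟨Nat.prime_two⟩
  have h2 : (2 : F) = 0 := by exact_mod_cast CharP.cast_eq_zero F 2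
  have hpc : ∀ x : F, x ^ 2 ^ (2 * r + 1) = x := by
    intro x; rw [← hq]; exact FiniteField.pow_card x
  have hss : ∀ x : F, (x ^ 2 ^ (r + 1)) ^ 2 ^ (r + 1) = x ^ 2 := by
    intro x
    rw [← pow_mul, ← pow_add]
    have : r + 1 + (r + 1) = (2 * r + 1) + 1 := by ring
    rw [this, pow_succ, pow_mul, hpc]
  have hsq : ∀ a : F, (a ^ 2 ^ (2 * r)) ^ 2 = a := by
    intro a
    rw [← pow_mul, ← pow_succ, hpc]
  have hadd : ∀ x y : F, (x + y) ^ 2 ^ (r + 1) = x ^ 2 ^ (r + 1) + y ^ 2 ^ (r + 1) :=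
    fun x y => add_pow_char_pow x y 2 (r + 1)
  set A1 := a11 ^ 2 ^ (r + 1) with hA1
  set A3 := a33 ^ 2 ^ (r + 1) with hA3
  set A4 := a44 ^ 2 ^ (r + 1) with hA4
  have hA3ne : A3 ≠ 0 := pow_ne_zero _ h33
  have hinv : A3⁻¹ * A3 = 1 := inv_mul_cancel₀ hA3ne
  set b := (A4 * A3⁻¹) ^ 2 ^ (2 * r) with hb
  set c := (A3⁻¹) ^ 2 ^ (2 * r) with hc
  set d := (A1 * A3⁻¹) ^ 2 ^ (2 * r) with hd
  have hb2 : b ^ 2 = A4 * A3⁻¹ := hsq _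
  have hc2 : c ^ 2 = A3⁻¹ := hsq _
  have hd2 : d ^ 2 = A1 * A3⁻¹ := hsq _
  have hcne : c ≠ 0 := by
    intro h
    apply hA3ne
    rw [h] at hc2
    simpa [eq_comm, inv_eq_zero] using hc2.symm
  set P : Polynomial F := Polynomial.C (a44 * b ^ 2) * Polynomial.X ^ 4 +
      Polynomial.C (a44 * c ^ 2 + a33 + b) * Polynomial.X ^ 2 +
      Polynomial.C c * Polynomial.X + Polynomial.C (a11 + a44 * d ^ 2 + d) with hP
  have hco : P.coeff 1 = c := by
    rw [hP]
    simp only [Polynomial.coeff_add, Polynomial.coeff_C_mul, Polynomial.coeff_X_pow,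
      Polynomial.coeff_X, Polynomial.coeff_C]
    norm_num
  have hPne : P ≠ 0 := fun h => hcne (by rw [h] at hco; simpa using hco.symm)
  have hdeg : P.natDegree ≤ 4 := by
    rw [hP]; compute_degree
  have hroot : ∀ x : F,
      a11 + a33 * x ^ 2 + a44 * (x ^ 2 ^ (r + 1)) ^ 2 + x ^ 2 ^ (r + 1) = 0 →
      P.eval x = 0 := by
    intro x hE
    set y := x ^ 2 ^ (r + 1) with hy
    have hEσ : A1 + A3 * y ^ 2 + A4 * x ^ 4 + x ^ 2 = 0 := by
      have h0 := congrArg (· ^ 2 ^ (r + 1)) hE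
      rw [hadd, hadd, hadd, mul_pow, mul_pow, zero_pow (by positivity)] at h0
      have e1 : (x ^ 2) ^ 2 ^ (r + 1) = y ^ 2 := by
        rw [hy, ← pow_mul, ← pow_mul, mul_comm]
      have e2 : (y ^ 2) ^ 2 ^ (r + 1) = x ^ 4 := by
        rw [← pow_mul, mul_comm, pow_mul, hy, hss, ← pow_mul]
      have e3 : y ^ 2 ^ (r + 1) = x ^ 2 := hss x
      rw [e1, e2, e3] at h0
      exact h0
    have h' : A3 * y ^ 2 = A1 + A4 * x ^ 4 + x ^ 2 := by
      linear_combination hEσ - (A1 + A4 * x ^ 4 + x ^ 2) * h2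
    have hy2 : y ^ 2 = d ^ 2 + b ^ 2 * x ^ 4 + c ^ 2 * x ^ 2 := by
      rw [hb2, hc2, hd2]
      linear_combination A3⁻¹ * h' - y ^ 2 * hinv
    have hyv : y = d + b * x ^ 2 + c * x := by
      have hsqz : (y + (d + b * x ^ 2 + c * x)) ^ 2 = 0 := by
        linear_combination hy2 + (y * (d + b * x ^ 2 + c * x) + d ^ 2 + b ^ 2 * x ^ 4 +
          c ^ 2 * x ^ 2 + d * b * x ^ 2 + d * c * x + b * c * x ^ 3) * h2
      have h1 := pow_eq_zero_iff (n := 2) (by norm_num) |>.mp hsqz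
      have h1' := eq_neg_of_add_eq_zero_left h1
      rwa [CharTwo.neg_eq] at h1'
    rw [hP]
    simp only [Polynomial.eval_add, Polynomial.eval_mul, Polynomial.eval_pow,
      Polynomial.eval_C, Polynomial.eval_X]
    rw [hyv] at hE
    linear_combination hE - a44 * (d * b * x ^ 2 + d * c * x + b * c * x ^ 3) * h2
  have hsub : {x : F | a11 + a33 * x ^ 2 + a44 * (x ^ 2 ^ (r + 1)) ^ 2 + x ^ 2 ^ (r + 1) = 0}
      ⊆ (P.roots.toFinset : Set F) := by
    intro x hx
    rw [Finset.mem_coe, Multiset.mem_toFinset, Polynomial.mem_roots hPne]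
    exact hroot x hx
  calc Set.ncard {x : F | a11 + a33 * x ^ 2 + a44 * (x ^ 2 ^ (r + 1)) ^ 2 + x ^ 2 ^ (r + 1) = 0}
      ≤ (P.roots.toFinset : Set F).ncard := Set.ncard_le_ncard hsub (Set.toFinite _)
    _ = P.roots.toFinset.card := Set.ncard_coe_finset _
    _ ≤ Multiset.card P.roots := Multiset.toFinset_card_le _
    _ ≤ P.natDegree := Polynomial.card_roots' P
    _ ≤ 4 := hdeg
end

section
/- Let q = 2^(2r+1) with r ≥ 1 and let σ(x) = x^(2^(r+1)). For any a₁₁, a₃₃ ∈ F_q with a₃₃ ≠ 0, the equation a₁₁ + a₃₃ x² + x^σ = 0 has at most two solutions x ∈ F_q. -/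
/-- For `q = 2^(2r+1)`, `r ≥ 1`, `σ(x) = x^(2^(r+1))`, and
`a₁₁, a₃₃ ∈ F_q` with `a₃₃ ≠ 0`, the equation `a₁₁ + a₃₃ x² + x^σ = 0`
has at most two solutions. -/
theorem stmt1 (F : Type*) [Field F] [Fintype F] (r : ℕ) (hr : 1 ≤ r)
    (hq : Fintype.card F = 2 ^ (2 * r + 1)) (a11 a33 : F) (h33 : a33 ≠ 0) :
    Set.ncard {x : F | a11 + a33 * x ^ 2 + x ^ 2 ^ (r + 1) = 0} ≤ 2 := by
  classical
  -- characteristic 2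
  have hprime : (ringChar F).Prime := CharP.char_is_prime F (ringChar F)
  have hdvd : ringChar F ∣ 2 ^ (2 * r + 1) := by
    rw [← hq]
    exact (CharP.cast_eq_zero_iff F (ringChar F) _).mp (FiniteField.cast_card_eq_zero F)
  have hchar : ringChar F = 2 :=
    (Nat.prime_dvd_prime_iff_eq hprime Nat.prime_two).mp
      (hprime.dvd_of_dvd_pow hdvd)
  haveI h2 : CharP F 2 := by rw [← hchar]; exact ringChar.charP F
  haveI : Fact (Nat.Prime 2) := ⟨Nat.prime_two⟩
  haveI : ExpChar F 2 := ExpChar.prime Nat.prime_two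
  have h2z : (2 : F) = 0 := by
    have := CharP.cast_eq_zero F 2
    exact_mod_cast this
  set e : ℕ := 2 ^ (r + 1) with he
  have he4 : 4 ≤ e := by
    have : 2 ^ 2 ≤ 2 ^ (r + 1) := Nat.pow_le_pow_right (by norm_num) (by omega)
    simpa using this
  -- the kernel has at most one nonzero element
  have hker : ∀ y z : F, y ≠ 0 → z ≠ 0 →
      a33 * y ^ 2 + y ^ e = 0 → a33 * z ^ 2 + z ^ e = 0 → y = z := by
    intro y z hy0 hz0 hy hz
    have hy' : y ^ e = a33 * y ^ 2 := by linear_combination hy - a33 * y ^ 2 * h2z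
    have hz' : z ^ e = a33 * z ^ 2 := by linear_combination hz - a33 * z ^ 2 * h2z
    set uy : Fˣ := Units.mk0 y hy0
    set uz : Fˣ := Units.mk0 z hz0
    set u : Fˣ := uy * uz⁻¹ with hu
    have hueq : u ^ e = u ^ 2 := by
      ext
      show (y * z⁻¹) ^ e = (y * z⁻¹) ^ 2
      rw [mul_pow, mul_pow, inv_pow, inv_pow, hy', hz']
      field_simp
    have hu1 : u ^ (e - 2) = 1 := by
      have h1 : u ^ (e - 2) * u ^ 2 = u ^ e := by
        rw [← pow_add]; congr 1; omega
      have h2' : u ^ (e - 2) * u ^ 2 = 1 * u ^ 2 := by rw [h1, hueq, one_mul]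
      exact mul_right_cancel h2'
    set d : ℕ := orderOf u with hd
    have hd1 : d ∣ e - 2 := orderOf_dvd_of_pow_eq_one hu1
    have hd2 : d ∣ 2 ^ (2 * r + 1) - 1 := by
      have := orderOf_dvd_card (x := u)
      rwa [Fintype.card_units, hq] at this
    -- d is odd since it divides an odd number
    have hodd : Odd (2 ^ (2 * r + 1) - 1) := by
      have : Even (2 ^ (2 * r + 1)) := by
        refine (Nat.even_pow).mpr ⟨even_two, by omega⟩
      exact Nat.Even.sub_odd (Nat.one_le_two_pow) this odd_one
    have hdodd : Odd d := hodd.of_dvd_nat hd2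
    -- hence d divides 2^r - 1
    have hd3 : d ∣ 2 ^ r - 1 := by
      have hcop : Nat.Coprime d 2 := Nat.coprime_two_right.mpr hdodd
      have : d ∣ 2 * (2 ^ r - 1) := by
        have heq : e - 2 = 2 * (2 ^ r - 1) := by
          have : e = 2 * 2 ^ r := by rw [he, pow_succ, mul_comm]
          omega
        rwa [heq] at hd1
      exact (Nat.Coprime.dvd_of_dvd_mul_left hcop this)
    -- 2^r ≡ 1 and 2^(2r+1) ≡ 1 mod d give 2 ≡ 1 mod d, so d = 1
    have h1le : 1 ≤ 2 ^ r := Nat.one_le_two_pow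
    have hm1 : (1 : ℕ) ≡ 2 ^ r [MOD d] := (Nat.modEq_iff_dvd' h1le).mpr hd3
    have hm2 : (1 : ℕ) ≡ 2 ^ (2 * r + 1) [MOD d] :=
      (Nat.modEq_iff_dvd' Nat.one_le_two_pow).mpr hd2
    have hm3 : (2 : ℕ) ≡ 2 ^ (2 * r + 1) [MOD d] := by
      have := (hm1.pow 2).mul_right 2
      have heq2 : (2 ^ r) ^ 2 * 2 = 2 ^ (2 * r + 1) := by
        rw [← pow_mul, ← pow_succ]; ring
      simpa [heq2] using this
    have hm4 : (1 : ℕ) ≡ 2 [MOD d] := hm2.trans hm3.symm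
    have hdd : d ∣ 1 := by
      have := (Nat.modEq_iff_dvd' (by norm_num)).mp hm4
      simpa using this
    have hd_one : d = 1 := Nat.dvd_one.mp hdd
    have : u = 1 := orderOf_eq_one_iff.mp hd_one
    have : (y : F) * z⁻¹ = 1 := by
      have := congrArg (Units.val) this
      simpa [hu, uy, uz] using this
    field_simp at this
    exact this
  -- solution set
  set S : Set F := {x : F | a11 + a33 * x ^ 2 + x ^ e = 0} with hS
  rcases Set.eq_empty_or_nonempty S with hSe | ⟨x0, hx0⟩
  · simp [hSe]
  · set K : Set F := {x : F | a33 * x ^ 2 + x ^ e = 0} with hK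
    have hmap : ∀ x ∈ S, x + x0 ∈ K := by
      intro x hx
      have hx : a11 + a33 * x ^ 2 + x ^ e = 0 := hx
      have hx0' : a11 + a33 * x0 ^ 2 + x0 ^ e = 0 := hx0
      have hfrob : (x + x0) ^ e = x ^ e + x0 ^ e := by
        rw [he]; exact add_pow_char_pow x x0 2 (r + 1)
      show a33 * (x + x0) ^ 2 + (x + x0) ^ e = 0
      rw [hfrob]
      linear_combination hx + hx0' + (a33 * x * x0 - a11) * h2z
    have hinj : Set.InjOn (fun x => x + x0) S := fun a _ b _ h => by
      simpa using h
    have hle : S.ncard ≤ K.ncard :=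
      Set.ncard_le_ncard_of_injOn _ hmap hinj (Set.toFinite K)
    refine hle.trans ?_
    by_cases hne : ∃ y ∈ K, y ≠ 0
    · obtain ⟨y, hyK, hy0⟩ := hne
      have hsub : K ⊆ {0, y} := by
        intro z hzK
        by_cases hz0 : z = 0
        · exact Or.inl hz0
        · exact Or.inr (hker z y hz0 hy0 hzK hyK)
      calc K.ncard ≤ ({0, y} : Set F).ncard := Set.ncard_le_ncard hsub (Set.toFinite _)
        _ ≤ 2 := by
          refine (Set.ncard_insert_le _ _).trans ?_
          simp
    · push_neg at hne
      have hsub : K ⊆ {0} := fun z hz => hne z hz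
      calc K.ncard ≤ ({0} : Set F).ncard := Set.ncard_le_ncard hsub (Set.toFinite _)
        _ ≤ 2 := by simp
end

section
/- Let q = 2^(2r+1) with r ≥ 1 and σ(x) = x^(2^(r+1)). The set T = {(1, x₂, x₃, x₄) : x₂x₃ + x₂^(σ+2) + x₃^σ + x₄ = 0} ∪ {(0,0,0,1)} of points of PG(3,q) is an ovoid of the symplectic space W(3,q) defined by the form x₁y₄ + x₄y₁ + x₂y₃ + x₃y₂; that is, every totally isotropic line of this form meets T in exactly one point. -/
open Projectivization

theorem vec4_ne_zero_fst {F : Type*} [Field F] (a b c : F) :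
    (![1, a, b, c] : Fin 4 → F) ≠ 0 := by
  intro h
  have := congrFun h 0
  simp at this

theorem vec4_ne_zero_last {F : Type*} [Field F] :
    (![0, 0, 0, 1] : Fin 4 → F) ≠ 0 := by
  intro h
  have := congrFun h 3
  simp at this

/-- The Suzuki–Tits ovoid of `PG(3,q)`. -/
noncomputable def suzukiTits (F : Type*) [Field F] (r : ℕ) :
    Set (Projectivization F (Fin 4 → F)) :=
  {P | ∃ x₂ x₃ x₄ : F,
      x₂ * x₃ + x₂ ^ 2 ^ (r + 1) * x₂ ^ 2 + x₃ ^ 2 ^ (r + 1) + x₄ = 0 ∧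
      P = Projectivization.mk F ![1, x₂, x₃, x₄] (vec4_ne_zero_fst x₂ x₃ x₄)}
    ∪ {Projectivization.mk F ![0, 0, 0, 1] vec4_ne_zero_last}

/-- The alternating bilinear form defining `W(3,q)`. -/
def sympForm {F : Type*} [Field F] (u v : Fin 4 → F) : F :=
  u 0 * v 3 + u 3 * v 0 + u 1 * v 2 + u 2 * v 1

lemma key_inj {F : Type*} [Field F] (s : ℕ) (hs0 : s ≠ 0) (h2 : (2:F) = 0)
    (hadd : ∀ x y : F, (x+y)^s = x^s + y^s)
    (hss : ∀ x : F, (x^s)^s = x^2)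
    (k : F) :
    Function.Injective (fun u : F => u^s * u^2 + k^s * u^s + k * u^2) := by
  intro u v h
  dsimp only at h
  by_contra hne
  obtain ⟨w, rfl⟩ : ∃ w, u = v + w := ⟨u - v, by ring⟩
  have hwne : w ≠ 0 := by
    intro h0; subst h0; simp at hne
  rw [hadd] at h
  set z := v^s + k with hz
  have hzs : z^s = v^2 + k^s := by rw [hz, hadd, hss]
  have hE : w^s*w^2 + z^s*w^s + z*w^2 = 0 := by
    rw [hzs, hz]
    linear_combination h - (v*w*(v^s+w^s+k))*h2
  have hE2 : w^2*(w^s)^2 + z^2*w^2 + z^s*(w^s)^2 = 0 := by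
    have := congrArg (· ^ s) hE
    rw [hadd, hadd, mul_pow, mul_pow, mul_pow, hss, hss, pow_right_comm w 2 s,
      zero_pow hs0] at this
    linear_combination this
  have h3 : w^2*w^s*(z*(z+w^s)) = 0 := by
    linear_combination (w^s)*hE2 + ((w^s)^2)*hE - (w^2*(w^s)^3 + z^s*(w^s)^3)*h2
  have hzz : z*(z+w^s) = 0 := by
    rcases mul_eq_zero.mp h3 with h4 | h4
    · exact absurd h4 (mul_ne_zero (pow_ne_zero _ hwne) (pow_ne_zero _ hwne))
    · exact h4
  have hws : w^s * w^2 = 0 := by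
    rcases mul_eq_zero.mp hzz with h4 | h4
    · rw [h4, zero_pow hs0] at hE
      linear_combination hE
    · have h5 : z = w^s := by linear_combination h4 - (w^s)*h2
      rw [h5, hss] at hE
      linear_combination hE - (w^s*w^2)*h2
  rcases mul_eq_zero.mp hws with h6 | h6
  · exact hwne ((pow_eq_zero_iff hs0).mp h6)
  · exact hwne ((pow_eq_zero_iff two_ne_zero).mp h6)

lemma unique_root {F : Type*} [Field F] [Finite F] (s : ℕ) (hs0 : s ≠ 0) (h2 : (2:F) = 0)
    (hadd : ∀ x y : F, (x+y)^s = x^s + y^s)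
    (hss : ∀ x : F, (x^s)^s = x^2)
    (a b c d e : F) (hde : ¬(d = 0 ∧ e = 0)) :
    ∃! t : F, (a + t*d) * (b + t*e) + (a + t*d)^s * (a + t*d)^2 + (b + t*e)^s
      + (c + t*(a*e + b*d)) = 0 := by
  have hfrob_inj : Function.Injective (fun x : F => x^s) := by
    intro x y hxy
    dsimp only at hxy
    have h0 : (x+y)^s = 0 := by rw [hadd]; linear_combination hxy + y^s*h2
    have h1 : x + y = 0 := (pow_eq_zero_iff hs0).mp h0
    linear_combination h1 - y*h2
  have hfrob_surj : Function.Surjective (fun x : F => x^s) :=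
    Finite.injective_iff_surjective.mp hfrob_inj
  by_cases hd : d = 0
  · subst hd
    have he : e ≠ 0 := fun h => hde ⟨rfl, h⟩
    have hes : e^s ≠ 0 := pow_ne_zero s he
    obtain ⟨t₀, ht₀⟩ := hfrob_surj ((a*b + a^s*a^2 + b^s + c) / e^s)
    dsimp only at ht₀
    rw [eq_div_iff hes] at ht₀
    have hkey : ∀ t : F, (a + t*0) * (b + t*e) + (a + t*0)^s * (a + t*0)^2 + (b + t*e)^s
        + (c + t*(a*e + b*0)) = t^s*e^s + (a*b + a^s*a^2 + b^s + c) + (a*t*e)*2 := by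
      intro t
      rw [mul_zero, add_zero, hadd b (t*e), mul_pow]
      ring
    refine ⟨t₀, ?_, ?_⟩
    · beta_reduce
      rw [hkey]
      linear_combination ht₀ + (a*b + a^s*a^2 + b^s + c + a*t₀*e)*h2
    · intro t ht
      rw [hkey] at ht
      have : t^s*e^s = (a*b + a^s*a^2 + b^s + c) := by
        linear_combination ht - (a*b + a^s*a^2 + b^s + c + a*t*e)*h2
      apply hfrob_inj
      dsimp only
      rw [← ht₀] at this
      exact mul_right_cancel₀ hes this
  · have hd' : d ≠ 0 := hd
    have hds : (d:F)^s ≠ 0 := pow_ne_zero s hd'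
    set k : F := e*d⁻¹ + a^s with hk
    have hks : k^s = e^s*(d^s)⁻¹ + a^2 := by
      rw [hk, hadd, hss, mul_pow, inv_pow]
    set C : F := a*b + a^s*a^2 + b^s + c with hC
    have hid : ∀ t : F, (a + t*d) * (b + t*e) + (a + t*d)^s * (a + t*d)^2 + (b + t*e)^s
        + (c + t*(a*e + b*d))
        = (d*t)^s*(d*t)^2 + k^s*(d*t)^s + k*(d*t)^2 + C := by
      intro t
      rw [hadd a (t*d), hadd b (t*e), hks, hk, hC, mul_pow, mul_pow, mul_pow, mul_pow]
      field_simp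
      ring_nf
      linear_combination (a*a^s*t*d + a*t*t^s*d*d^s + a*t*e + t*d*b)*h2
    obtain ⟨u₀, hu₀⟩ := (Finite.injective_iff_surjective.mp
      (key_inj s hs0 h2 hadd hss k)) C
    dsimp only at hu₀
    refine ⟨d⁻¹*u₀, ?_, ?_⟩
    · beta_reduce
      rw [hid]
      have hdu : d*(d⁻¹*u₀) = u₀ := by field_simp
      rw [hdu]
      linear_combination hu₀ + C*h2
    · intro t ht
      rw [hid] at ht
      have h5 : (d*t)^s*(d*t)^2 + k^s*(d*t)^s + k*(d*t)^2 = C := by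
        linear_combination ht - C*h2
      have h6 : d*t = u₀ := key_inj s hs0 h2 hadd hss k (by dsimp only; rw [h5, hu₀])
      field_simp [← h6]
      linear_combination h6

/-- the Suzuki–Tits set `T` is an ovoid of `W(3,q)`:
every totally isotropic line meets `T` in exactly one point. -/
theorem stmt2 (F : Type*) [Field F] [Fintype F] (r : ℕ) (hr : 1 ≤ r)
    (hq : Fintype.card F = 2 ^ (2 * r + 1))
    (W : Submodule F (Fin 4 → F)) (hW : Module.finrank F W = 2)
    (hiso : ∀ u ∈ W, ∀ v ∈ W, sympForm u v = 0) :
    ∃! P : Projectivization F (Fin 4 → F), P ∈ suzukiTits F r ∧ P.rep ∈ W := by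
  classical
  obtain ⟨p, hp⟩ := CharP.exists F
  haveI := hp
  have hprime : p.Prime := CharP.char_is_prime F p
  obtain ⟨n, -, hcard⟩ := FiniteField.card F p
  have hp2 : p = 2 := by
    have hdvd : p ∣ 2 ^ (2*r+1) := by
      rw [← hq, hcard]
      exact dvd_pow_self p (by exact_mod_cast n.ne_zero)
    exact (Nat.prime_dvd_prime_iff_eq hprime Nat.prime_two).mp (hprime.dvd_of_dvd_pow hdvd)
  subst hp2
  haveI : Fact (Nat.Prime 2) := ⟨Nat.prime_two⟩
  have h2 : (2:F) = 0 := by exact_mod_cast CharP.cast_eq_zero F 2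
  set s := 2^(r+1) with hsdef
  have hs0 : s ≠ 0 := by positivity
  have hadd : ∀ x y : F, (x+y)^s = x^s + y^s := fun x y => add_pow_char_pow x y 2 (r+1)
  have hss : ∀ x : F, (x^s)^s = x^2 := by
    intro x
    rw [← pow_mul]
    have hm : s * s = 2^(2*r+1) * 2 := by
      rw [hsdef, ← pow_add]
      congr 1
      ring
    rw [hm, pow_mul, ← hq, FiniteField.pow_card]
  have hrep_mem : ∀ (v : Fin 4 → F) (hv : v ≠ 0),
      ((Projectivization.mk F v hv).rep ∈ W ↔ v ∈ W) := by
    intro v hv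
    obtain ⟨c, hc⟩ := (Projectivization.mk_eq_mk_iff F _ _
      (Projectivization.rep_nonzero _) hv).mp (Projectivization.mk_rep _)
    rw [← hc, Units.smul_def]
    exact W.smul_mem_iff c.ne_zero
  by_cases hcase : (![0,0,0,1] : Fin 4 → F) ∈ W
  · refine ⟨Projectivization.mk F ![0,0,0,1] vec4_ne_zero_last,
      ⟨Or.inr rfl, (hrep_mem _ _).mpr hcase⟩, ?_⟩
    rintro Q ⟨hQT, hQW⟩
    rcases hQT with ⟨x2, x3, x4, -, rfl⟩ | hQ
    · exfalso
      have hvW : (![1,x2,x3,x4] : Fin 4 → F) ∈ W := (hrep_mem _ _).mp hQW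
      have := hiso _ hcase _ hvW
      simp [sympForm] at this
    · exact hQ
  · -- case B
    have hWfd : FiniteDimensional F W := by infer_instance
    let B := Module.finBasisOfFinrankEq F W hW
    set b0 : Fin 4 → F := (B 0).1 with hb0def
    set b1 : Fin 4 → F := (B 1).1 with hb1def
    have hb0W : b0 ∈ W := (B 0).2
    have hb1W : b1 ∈ W := (B 1).2
    have hBli : LinearIndependent F (fun i : Fin 2 => ((B i : W) : Fin 4 → F)) :=
      B.linearIndependent.map' W.subtype W.ker_subtype
    have hBli' := Fintype.linearIndependent_iff.mp hBli
    have hspanB : ∀ v ∈ W, ∃ c0 c1 : F, v = c0 • b0 + c1 • b1 := by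
      intro v hv
      refine ⟨B.repr ⟨v, hv⟩ 0, B.repr ⟨v, hv⟩ 1, ?_⟩
      have h := B.sum_repr ⟨v, hv⟩
      rw [Fin.sum_univ_two] at h
      have h' := congrArg (Subtype.val) h
      simp only [Submodule.coe_add, SetLike.val_smul] at h'
      exact h'.symm
    have hli : ∀ g : Fin 2 → F, g 0 • b0 + g 1 • b1 = 0 → g 0 = 0 ∧ g 1 = 0 := by
      intro g hg
      have := hBli' g (by rw [Fin.sum_univ_two]; exact hg)
      exact ⟨this 0, this 1⟩
    clear_value b0 b1
    clear hb0def hb1def hBli hBli' B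
    have he4 : ∀ v ∈ W, v 0 = 0 → v 1 = 0 → v 2 = 0 → v ≠ 0 →
        (![0,0,0,1] : Fin 4 → F) ∈ W := by
      intro v hv h0 h1 h2' hne
      have h3 : v 3 ≠ 0 := by
        intro h3
        apply hne
        funext i; fin_cases i <;> simp [h0, h1, h2', h3]
      have hv3 : (v 3)⁻¹ • v = ![0,0,0,1] := by
        funext i; fin_cases i <;> simp [h0, h1, h2', inv_mul_cancel₀ h3]
      rw [← hv3]
      exact W.smul_mem _ hv
    have hexu : ∃ v ∈ W, v 0 ≠ 0 := by
      by_contra hcon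
      push_neg at hcon
      apply hcase
      have hb0ne : b0 ≠ 0 := by
        intro h0
        have := (hli ![1, 0] (by
          simp only [Matrix.cons_val_zero, Matrix.cons_val_one, Matrix.head_cons,
            one_smul, zero_smul, add_zero, h0])).1
        simpa using this
      have h01 : b0 1 * b1 2 + b0 2 * b1 1 = 0 := by
        have := hiso b0 hb0W b1 hb1W
        simp only [sympForm, hcon b0 hb0W, hcon b1 hb1W, mul_zero, zero_mul,
          add_zero, zero_add] at this
        exact this
      by_cases hb01 : b0 1 = 0
      · by_cases hb02 : b0 2 = 0
        · exact he4 b0 hb0W (hcon b0 hb0W) hb01 hb02 hb0ne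
        · -- use v := b0 2 • b1 + b1 2 • b0
          set v : Fin 4 → F := b0 2 • b1 + b1 2 • b0 with hvdef
          have hvW : v ∈ W := add_mem (W.smul_mem _ hb1W) (W.smul_mem _ hb0W)
          have hvne : v ≠ 0 := by
            intro hv0
            apply hb02
            rw [hvdef] at hv0
            have := (hli ![b1 2, b0 2] (by
              simp only [Matrix.cons_val_zero, Matrix.cons_val_one, Matrix.head_cons]
              rw [add_comm]
              exact hv0)).2
            simpa using this
          refine he4 v hvW ?_ ?_ ?_ hvne
          · simp [hvdef, hcon b0 hb0W, hcon b1 hb1W]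
          · have : v 1 = b0 2 * b1 1 + b1 2 * b0 1 := by simp [hvdef]
            rw [this]; linear_combination h01
          · have : v 2 = b0 2 * b1 2 + b1 2 * b0 2 := by simp [hvdef]
            rw [this]; linear_combination (b0 2 * b1 2) * h2
      · -- use v := b0 1 • b1 + b1 1 • b0
        set v : Fin 4 → F := b0 1 • b1 + b1 1 • b0 with hvdef
        have hvW : v ∈ W := add_mem (W.smul_mem _ hb1W) (W.smul_mem _ hb0W)
        have hvne : v ≠ 0 := by
          intro hv0
          apply hb01
          rw [hvdef] at hv0
          have := (hli ![b1 1, b0 1] (by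
            simp only [Matrix.cons_val_zero, Matrix.cons_val_one, Matrix.head_cons]
            rw [add_comm]
            exact hv0)).2
          simpa using this
        refine he4 v hvW ?_ ?_ ?_ hvne
        · simp [hvdef, hcon b0 hb0W, hcon b1 hb1W]
        · have : v 1 = b0 1 * b1 1 + b1 1 * b0 1 := by simp [hvdef]
          rw [this]; linear_combination (b0 1 * b1 1) * h2
        · have : v 2 = b0 1 * b1 2 + b1 1 * b0 2 := by simp [hvdef]
          rw [this]; linear_combination h01
    obtain ⟨u', hu'W, hu'0⟩ := hexu
    set u : Fin 4 → F := (u' 0)⁻¹ • u' with hudef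
    have huW : u ∈ W := W.smul_mem _ hu'W
    have hu0 : u 0 = 1 := by rw [hudef]; simp [inv_mul_cancel₀ hu'0]
    clear_value u
    have hb00 : ¬(b0 0 = 0 ∧ b1 0 = 0) := by
      rintro ⟨h0, h1⟩
      obtain ⟨c0, c1, hc⟩ := hspanB u huW
      apply one_ne_zero (α := F)
      rw [← hu0, hc]
      simp [h0, h1]
    set w : Fin 4 → F := b1 0 • b0 - b0 0 • b1 with hwdef
    have hwW : w ∈ W := sub_mem (W.smul_mem _ hb0W) (W.smul_mem _ hb1W)
    have hw0 : w 0 = 0 := by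
      rw [hwdef]
      simp only [Pi.sub_apply, Pi.smul_apply, smul_eq_mul]
      ring
    have hwne : w ≠ 0 := by
      intro h0
      rw [hwdef] at h0
      have := hli ![b1 0, -(b0 0)] (by
        simp only [Matrix.cons_val_zero, Matrix.cons_val_one, Matrix.head_cons, neg_smul]
        rw [← sub_eq_add_neg]
        exact h0)
      exact hb00 ⟨by simpa using this.2, by simpa using this.1⟩
    have hker : ∀ n ∈ W, n 0 = 0 → ∃ t : F, n = t • w := by
      intro n hn hn0
      obtain ⟨c0, c1, hc⟩ := hspanB n hn
      have hc0 : c0 * b0 0 + c1 * b1 0 = 0 := by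
        have := congrFun hc 0
        rw [hn0] at this
        simpa using this.symm
      by_cases h00 : b0 0 = 0
      · have hb10 : b1 0 ≠ 0 := fun h => hb00 ⟨h00, h⟩
        have hc1 : c1 = 0 := by
          rw [h00] at hc0
          simpa [hb10] using hc0
        refine ⟨c0 * (b1 0)⁻¹, ?_⟩
        rw [hc, hc1, hwdef, h00, zero_smul, sub_zero, smul_smul, add_zero,
          mul_assoc, inv_mul_cancel₀ hb10, mul_one]
      · refine ⟨-(c1) * (b0 0)⁻¹, ?_⟩
        have e1 : c0 = (-(c1) * (b0 0)⁻¹) * b1 0 := by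
          field_simp
          linear_combination hc0
        have e2 : c1 = -((-(c1) * (b0 0)⁻¹) * b0 0) := by field_simp
        rw [hc, hwdef]
        nth_rewrite 1 [e1]
        nth_rewrite 2 [e2]
        module
    clear_value w
    have hmem : ∀ v ∈ W, ∃ t : F, v = v 0 • u + t • w := by
      intro v hv
      have hnmem : v - v 0 • u ∈ W := sub_mem hv (W.smul_mem _ huW)
      have hn0 : (v - v 0 • u) 0 = 0 := by simp [hu0]
      obtain ⟨t, htn⟩ := hker _ hnmem hn0
      refine ⟨t, ?_⟩
      rw [← htn]
      module
    set ua := u 1 with hua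
    set ub := u 2 with hub
    set uc := u 3 with huc
    set d := w 1 with hd
    set e := w 2 with he
    have hfz : w 3 = ua * e + ub * d := by
      have := hiso u huW w hwW
      simp only [sympForm, hu0, hw0, one_mul, mul_zero, add_zero] at this
      rw [← hua, ← hub, ← hd, ← he] at this
      linear_combination this - (ua*e + ub*d)*h2
    have hde : ¬(d = 0 ∧ e = 0) := by
      rintro ⟨hd0, he0⟩
      apply hwne
      have h3 : w 3 = 0 := by rw [hfz, hd0, he0]; ring
      funext i
      fin_cases i
      · simpa using hw0
      · simpa using hd0
      · simpa using he0
      · simpa using h3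
    obtain ⟨t₀, ht₀, htuniq⟩ := unique_root s hs0 h2 hadd hss ua ub uc d e hde
    have hVW : ∀ t : F, (![1, ua + t*d, ub + t*e, uc + t*(ua*e + ub*d)] : Fin 4 → F) ∈ W := by
      intro t
      have : (![1, ua + t*d, ub + t*e, uc + t*(ua*e + ub*d)] : Fin 4 → F) = u + t • w := by
        funext i
        fin_cases i
        · simp [hu0, hw0]
        · simp [hua, hd]; try ring
        · simp [hub, he]; try ring
        · simp [hfz, huc]; try ring
      rw [this]
      exact add_mem huW (W.smul_mem _ hwW)
    refine ⟨Projectivization.mk F ![1, ua + t₀*d, ub + t₀*e, uc + t₀*(ua*e + ub*d)]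
      (vec4_ne_zero_fst _ _ _), ⟨Or.inl ⟨ua + t₀*d, ub + t₀*e, uc + t₀*(ua*e + ub*d),
        ?_, rfl⟩, (hrep_mem _ _).mpr (hVW t₀)⟩, ?_⟩
    · exact ht₀
    · rintro Q ⟨hQT, hQW⟩
      rcases hQT with ⟨x2, x3, x4, heq, rfl⟩ | hQ
      · have hvW : (![1,x2,x3,x4] : Fin 4 → F) ∈ W := (hrep_mem _ _).mp hQW
        obtain ⟨t, htv⟩ := hmem _ hvW
        have hv0 : (![1,x2,x3,x4] : Fin 4 → F) 0 = 1 := by simp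
        rw [hv0, one_smul] at htv
        have hx2 : x2 = ua + t*d := by
          have := congrFun htv 1
          simpa [hua, hd, mul_comm] using this
        have hx3 : x3 = ub + t*e := by
          have := congrFun htv 2
          simpa [hub, he, mul_comm] using this
        have hx4 : x4 = uc + t*(ua*e + ub*d) := by
          have := congrFun htv 3
          rw [show (![1,x2,x3,x4] : Fin 4 → F) 3 = x4 by simp,
            show (u + t • w) 3 = u 3 + t * w 3 by simp] at this
          rw [this, hfz, huc]
        rw [hx2, hx3, hx4] at heq
        have ht : t = t₀ := htuniq t heq
        subst hx2 hx3 hx4 ht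
        rfl
      · exfalso
        apply hcase
        rw [hQ] at hQW
        exact (hrep_mem _ _).mp hQW
end

section
/- Let q = 2^(2r+1), r ≥ 1, and σ(x) = x^(2^(r+1)). The set T' = {(1, x₂, x₃, x₄, x₅) : x₄ = x₂^(σ+1) + x₃^σ and x₅ = x₂x₃^σ + x₂^(σ+2) + x₃²} ∪ {(0,0,0,0,1)} is contained in the parabolic quadric Q(4,q) : X₁X₅ + X₂X₄ + X₃² = 0 of PG(4,q), and no line of PG(4,q) meets T' in more than two points. -/
open Projectivization

/-- The parabolic quadric `Q(4,q) : X₁X₅ + X₂X₄ + X₃² = 0`. -/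
def parQuad {F : Type*} [Field F] (v : Fin 5 → F) : F :=
  v 0 * v 4 + v 1 * v 3 + v 2 ^ 2

theorem vec5_ne_zero_fst {F : Type*} [Field F] (a b c d : F) :
    (![1, a, b, c, d] : Fin 5 → F) ≠ 0 := by
  intro h
  have := congrFun h 0
  simp at this

theorem vec5_ne_zero_last {F : Type*} [Field F] :
    (![0, 0, 0, 0, 1] : Fin 5 → F) ≠ 0 := by
  intro h
  have := congrFun h 4
  simp at this

/-- The Suzuki–Tits ovoid `T'` of the parabolic quadric `Q(4,q)`. -/
noncomputable def suzukiTitsQ4 (F : Type*) [Field F] (r : ℕ) :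
    Set (Projectivization F (Fin 5 → F)) :=
  {P | ∃ x₂ x₃ : F,
      P = Projectivization.mk F
        ![1, x₂, x₃, x₂ ^ 2 ^ (r + 1) * x₂ + x₃ ^ 2 ^ (r + 1),
          x₂ * x₃ ^ 2 ^ (r + 1) + x₂ ^ 2 ^ (r + 1) * x₂ ^ 2 + x₃ ^ 2]
        (vec5_ne_zero_fst _ _ _ _)}
    ∪ {Projectivization.mk F ![0, 0, 0, 0, 1] vec5_ne_zero_last}


private lemma stcore {F : Type*} [Field F] (k : ℕ) (hk : k ≠ 0) (htwo : (2:F) = 0)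
    (hadd : ∀ x y : F, (x + y)^k = x^k + y^k)
    (hkk : ∀ x : F, (x^k)^k = x^2)
    (a b s t α β : F) (hst : ¬(s = 0 ∧ t = 0)) (hαβ : α + β = 1)
    (H4 : (α*a+β*(a+s))^k*(α*a+β*(a+s)) + (α*b+β*(b+t))^k
        = α*(a^k*a + b^k) + β*((a+s)^k*(a+s) + (b+t)^k))
    (H5 : (α*a+β*(a+s))*(α*b+β*(b+t))^k + (α*a+β*(a+s))^k*(α*a+β*(a+s))^2 + (α*b+β*(b+t))^2
        = α*(a*b^k + a^k*a^2 + b^2) + β*((a+s)*(b+t)^k + (a+s)^k*(a+s)^2 + (b+t)^2)) :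
    β = 0 ∨ β = 1 := by
  by_contra hcon
  push_neg at hcon
  obtain ⟨hβ0, hβ1⟩ := hcon
  have hβ1' : β + 1 ≠ 0 := by
    intro h; exact hβ1 (by linear_combination h - htwo)
  have hBne : β^2 + β ≠ 0 := by
    intro h
    rcases mul_eq_zero.mp (show β*(β+1) = 0 by linear_combination h) with h' | h'
    · exact hβ0 h'
    · exact hβ1' h'
  have hE : α*a+β*(a+s) = a + β*s := by linear_combination a*hαβ
  have hF : α*b+β*(b+t) = b + β*t := by linear_combination b*hαβ
  rw [hE, hF] at H4 H5
  simp only [hadd, mul_pow] at H4 H5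
  by_cases hs : s = 0
  · subst hs
    have ht : t ≠ 0 := fun h => hst ⟨rfl, h⟩
    rw [zero_pow hk] at H4 H5
    have h1 : (β^k + β)*t^k = 0 := by
      linear_combination H4 + (b^k + a*a^k)*hαβ + (β*t^k)*htwo
    have h2 : (β^2 + β)*t^2 = 0 := by
      linear_combination H5 + a*h1 + (b^2 + a*b^k + a^2*a^k)*hαβ + (β*t^2 - a*t^k*β^k)*htwo
    rcases mul_eq_zero.mp h2 with h' | h'
    · exact hBne h'
    · exact pow_ne_zero 2 ht h'
  · have hsk : s^k ≠ 0 := pow_ne_zero k hs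
    have key : (β^2+β) * (a^k*s^2 + t^2 + a*s*s^k + t^k*s + s^2*s^k) * (s*s^k)^2 = 0 := by
      linear_combination
        ((2:F)*s^2*s^k*t^k + s^3*β*(s^k)^2 + a*s^2*(s^k)^2) * H4
        + (s^2*(s^k)^2) * H5
        + (s^3*β*b^k*(s^k)^2 + b^2*s^2*(s^k)^2 + a*s^3*β*a^k*(s^k)^2) * hαβ
        + ((-1:F)*s^2*s^k*(t^k)^2*β^k + (-1:F)*s^2*b^k*s^k*t^k + s^2*β*s^k*(t^k)^2
          + s^2*β*b^k*s^k*t^k + s^2*α*b^k*s^k*t^k + s^2*t^2*β*(s^k)^2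
          + (2:F)*s^3*β*(s^k)^2*t^k + (-2:F)*s^3*β*(s^k)^2*t^k*β^k + s^3*β^2*(s^k)^2*t^k
          + s^4*β*(s^k)^3 + s^4*β*a^k*(s^k)^2 + s^4*β^2*(s^k)^3 + (-1:F)*s^4*β^2*(s^k)^3*β^k
          + (-2:F)*a*s^2*(s^k)^2*t^k*β^k + (-1:F)*a*s^2*b^k*(s^k)^2 + (-1:F)*a*s^2*a^k*s^k*t^k
          + (2:F)*a*s^2*β*(s^k)^2*t^k + a*s^2*β*b^k*(s^k)^2 + a*s^2*β*a^k*s^k*t^k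
          + a*s^2*α*b^k*(s^k)^2 + a*s^2*α*a^k*s^k*t^k + (2:F)*a*s^3*β*(s^k)^3
          + (-2:F)*a*s^3*β*(s^k)^3*β^k + a*s^3*β^2*(s^k)^3 + (-1:F)*a^2*s^2*(s^k)^3*β^k
          + (-1:F)*a^2*s^2*a^k*(s^k)^2 + a^2*s^2*β*(s^k)^3 + a^2*s^2*β*a^k*(s^k)^2
          + a^2*s^2*α*a^k*(s^k)^2) * htwo
    have hR0 : a^k*s^2 + t^2 + a*s*s^k + t^k*s + s^2*s^k = 0 := by
      rcases mul_eq_zero.mp key with h | h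
      · rcases mul_eq_zero.mp h with h' | h'
        · exact absurd h' hBne
        · exact h'
      · exact absurd h (pow_ne_zero 2 (mul_ne_zero hs hsk))
    have hR1 : a^2*(s^k)^2 + (t^k)^2 + a^k*s^k*s^2 + t^2*s^k + (s^k)^2*s^2 = 0 := by
      have h := congrArg (fun x : F => x^k) hR0
      simp only [hadd, mul_pow, hkk, zero_pow hk, pow_right_comm _ 2 k] at h
      linear_combination h
    have hNN : (a*s^k + t^k) * ((a*s^k + t^k) + s*s^k) = 0 := by
      linear_combination s^k*hR0 + hR1
        + (-(t^2*s^k) - s^2*(s^k)^2 - s^2*a^k*s^k + a*s^k*t^k)*htwo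
    have hss : s^2*s^k ≠ 0 := mul_ne_zero (pow_ne_zero 2 hs) hsk
    rcases mul_eq_zero.mp hNN with hN | hN
    · have hσN : a^k*s^2 + t^2 = 0 := by
        have h := congrArg (fun x : F => x^k) hN
        simp only [hadd, mul_pow, hkk, zero_pow hk] at h
        linear_combination h
      exact hss (by linear_combination hR0 + hσN + s*hN
        + (-t^2 - s*t^k - s^2*a^k - a*s*s^k)*htwo)
    · have hσN : a^k*s^2 + t^2 + s^k*s^2 = 0 := by
        have h := congrArg (fun x : F => x^k) hN
        simp only [hadd, mul_pow, hkk, zero_pow hk] at h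
        linear_combination h
      exact hss (by linear_combination hR0 + hσN + s*hN
        + (-t^2 - s*t^k - s^2*s^k - s^2*a^k - a*s*s^k)*htwo)


open Projectivization

section
variable {F : Type*} [Field F]


private lemma mem_of_mk_rep_mem {v : Fin 5 → F} (hv : v ≠ 0) {W : Submodule F (Fin 5 → F)}
    (h : (Projectivization.mk F v hv).rep ∈ W) : v ∈ W := by
  obtain ⟨u, hu⟩ := Projectivization.exists_smul_eq_mk_rep F v hv
  have hv' : v = (u⁻¹ : Fˣ) • (Projectivization.mk F v hv).rep := by
    rw [← hu, inv_smul_smul]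
  rw [hv', Units.smul_def]
  exact W.smul_mem _ h

private lemma span_combo {W : Submodule F (Fin 5 → F)} (hW : Module.finrank F W = 2)
    {v w u : Fin 5 → F} (hv : v ∈ W) (hw : w ∈ W) (hu : u ∈ W)
    (hind : LinearIndependent F ![v, w]) : ∃ α β : F, α • v + β • w = u := by
  have hrange : Set.range ![v, w] = {v, w} := by
    ext x
    simp [Matrix.range_cons, Matrix.range_empty, or_comm]
  have hle : Submodule.span F {v, w} ≤ W := by
    rw [Submodule.span_le]
    rintro x (rfl | rfl)
    · exact hv
    · exact hw
  have hr : Module.finrank F (Submodule.span F ({v, w} : Set (Fin 5 → F))) = 2 := by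
    rw [← hrange, finrank_span_eq_card hind]
    simp
  have heq : Submodule.span F ({v, w} : Set (Fin 5 → F)) = W :=
    Submodule.eq_of_le_of_finrank_le hle (by rw [hW, hr])
  exact Submodule.mem_span_pair.mp (heq ▸ hu)

end
section
variable {F : Type*} [Field F]

private lemma lemA {W : Submodule F (Fin 5 → F)} (hW : Module.finrank F W = 2)
    (a b c d p1 q1 p2 q2 : F)
    (h0 : (![0,0,0,0,1] : Fin 5 → F) ∈ W)
    (h1 : (![1,a,b,p1,q1] : Fin 5 → F) ∈ W)
    (h2 : (![1,c,d,p2,q2] : Fin 5 → F) ∈ W)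
    (hne : ¬(a = c ∧ b = d)) : False := by
  have hind : LinearIndependent F ![(![0,0,0,0,1] : Fin 5 → F), ![1,a,b,p1,q1]] := by
    rw [linearIndependent_fin2]
    constructor
    · show (![1,a,b,p1,q1] : Fin 5 → F) ≠ 0
      intro h
      simpa using congrFun h 0
    · intro z h
      have hz0 := congrFun h 0
      have hz4 := congrFun h 4
      simp [Pi.smul_apply, smul_eq_mul] at hz0 hz4
      rw [hz0, zero_mul] at hz4
      exact zero_ne_one hz4
  obtain ⟨α, β, hcomb⟩ := span_combo hW h0 h1 h2 hind
  have e0 := congrFun hcomb 0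
  have e1 := congrFun hcomb 1
  have e2 := congrFun hcomb 2
  simp [Pi.add_apply, Pi.smul_apply, smul_eq_mul] at e0 e1 e2
  exact hne ⟨by linear_combination e1 - a*e0, by linear_combination e2 - b*e0⟩

end
section
variable {F : Type*} [Field F]

private lemma lemB (k : ℕ) (hk : k ≠ 0) (htwo : (2:F) = 0)
    (hadd : ∀ x y : F, (x + y)^k = x^k + y^k)
    (hkk : ∀ x : F, (x^k)^k = x^2)
    {W : Submodule F (Fin 5 → F)} (hW : Module.finrank F W = 2)
    (a b c d e f : F)
    (h1 : (![1,a,b,a^k*a+b^k, a*b^k+a^k*a^2+b^2] : Fin 5 → F) ∈ W)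
    (h2 : (![1,c,d,c^k*c+d^k, c*d^k+c^k*c^2+d^2] : Fin 5 → F) ∈ W)
    (h3 : (![1,e,f,e^k*e+f^k, e*f^k+e^k*e^2+f^2] : Fin 5 → F) ∈ W)
    (h12 : ¬(a = c ∧ b = d)) (h13 : ¬(a = e ∧ b = f)) (h23 : ¬(c = e ∧ d = f)) :
    False := by
  have hind : LinearIndependent F
      ![(![1,a,b,a^k*a+b^k, a*b^k+a^k*a^2+b^2] : Fin 5 → F),
        ![1,c,d,c^k*c+d^k, c*d^k+c^k*c^2+d^2]] := by
    rw [linearIndependent_fin2]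
    constructor
    · show (![1,c,d,c^k*c+d^k, c*d^k+c^k*c^2+d^2] : Fin 5 → F) ≠ 0
      intro h
      simpa using congrFun h 0
    · intro z h
      have hz0 := congrFun h 0
      have hz1 := congrFun h 1
      have hz2 := congrFun h 2
      simp [Pi.smul_apply, smul_eq_mul] at hz0 hz1 hz2
      exact h12 ⟨by linear_combination -hz1 + c*hz0, by linear_combination -hz2 + d*hz0⟩
  obtain ⟨α, β, hcomb⟩ := span_combo hW h1 h2 h3 hind
  have e0 := congrFun hcomb 0
  have e1 := congrFun hcomb 1
  have e2 := congrFun hcomb 2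
  have e3 := congrFun hcomb 3
  have e4 := congrFun hcomb 4
  simp only [Pi.add_apply, Pi.smul_apply, smul_eq_mul, Matrix.cons_val_zero,
    Matrix.cons_val_one, Matrix.head_cons, Matrix.cons_val_two, Matrix.tail_cons,
    Matrix.cons_val_three, Matrix.cons_val_four] at e0 e1 e2 e3 e4
  rw [← e1, ← e2] at e3 e4
  obtain ⟨s, hs⟩ : ∃ s, c = a + s := ⟨a + c, by linear_combination (-a)*htwo⟩
  obtain ⟨t, ht⟩ : ∃ t, d = b + t := ⟨b + d, by linear_combination (-b)*htwo⟩
  rw [hs, ht] at e3 e4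
  have hst : ¬(s = 0 ∧ t = 0) := by
    rintro ⟨hs0, ht0⟩
    exact h12 ⟨by rw [hs, hs0, add_zero], by rw [ht, ht0, add_zero]⟩
  have e0' : α + β = 1 := by linear_combination e0
  rcases stcore k hk htwo hadd hkk a b s t α β hst e0' e3.symm e4.symm with hβ | hβ
  · subst hβ
    have hα : α = 1 := by linear_combination e0
    exact h13 ⟨by linear_combination e1 - a*hα, by linear_combination e2 - b*hα⟩
  · subst hβ
    have hα : α = 0 := by linear_combination e0
    exact h23 ⟨by linear_combination e1 - a*hα, by linear_combination e2 - b*hα⟩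

end

section
variable {F : Type*} [Field F]

private lemma parQuad_rep_eq_zero {v : Fin 5 → F} (hv : v ≠ 0) (h : parQuad v = 0)
    (P : Projectivization F (Fin 5 → F)) (hP : P = Projectivization.mk F v hv) :
    parQuad P.rep = 0 := by
  obtain ⟨u, hu⟩ := Projectivization.exists_smul_eq_mk_rep F v hv
  rw [hP, ← hu, Units.smul_def]
  unfold parQuad at h ⊢
  simp only [Pi.smul_apply, smul_eq_mul]
  linear_combination (u:F)^2 * h

end

/-- `T'` is contained in `Q(4,q)` and no line of `PG(4,q)` meets
`T'` in more than two points. -/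
theorem stmt8 (F : Type*) [Field F] [Fintype F] (r : ℕ) (hr : 1 ≤ r)
    (hq : Fintype.card F = 2 ^ (2 * r + 1)) :
    suzukiTitsQ4 F r ⊆ {P | parQuad P.rep = 0} ∧
    ∀ W : Submodule F (Fin 5 → F), Module.finrank F W = 2 →
      {P | P ∈ suzukiTitsQ4 F r ∧ P.rep ∈ W}.ncard ≤ 2 := by
  have h2F : (2:F) = 0 := by
    have hc : ((Fintype.card F : ℕ) : F) = 0 := FiniteField.cast_card_eq_zero F
    rw [hq] at hc
    push_cast at hc
    exact pow_eq_zero_iff (Nat.succ_ne_zero _) |>.mp hc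
  haveI : CharP F 2 := by
    have hdvd : ringChar F ∣ 2 := (CharP.cast_eq_zero_iff F (ringChar F) 2).mp h2F
    rcases (Nat.dvd_prime Nat.prime_two).mp hdvd with h | h
    · exfalso
      haveI : CharP F 1 := h ▸ ringChar.charP F
      have h1 : ((1:ℕ):F) = 0 := CharP.cast_eq_zero F 1
      rw [Nat.cast_one] at h1
      exact one_ne_zero h1
    · exact h ▸ ringChar.charP F
  have hk : (2:ℕ)^(r+1) ≠ 0 := pow_ne_zero _ (by norm_num)
  have hadd : ∀ x y : F, (x + y)^2^(r+1) = x^2^(r+1) + y^2^(r+1) := fun x y =>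
    add_pow_char_pow x y 2 (r+1)
  have hkk : ∀ x : F, (x^2^(r+1))^2^(r+1) = x^2 := by
    intro x
    rw [← pow_mul, ← pow_add]
    have h : (r+1)+(r+1) = (2*r+1)+1 := by ring
    rw [h, pow_succ, pow_mul, ← hq, FiniteField.pow_card]
  constructor
  · intro P hP
    simp only [suzukiTitsQ4, Set.mem_union, Set.mem_setOf_eq, Set.mem_singleton_iff] at hP
    rcases hP with ⟨x, y, hP⟩ | hP
    · refine parQuad_rep_eq_zero _ ?_ P hP
      unfold parQuad
      simp only [Matrix.cons_val_zero, Matrix.cons_val_one, Matrix.head_cons,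
        Matrix.cons_val_two, Matrix.tail_cons, Matrix.cons_val_three, Matrix.cons_val_four]
      linear_combination (x*y^2^(r+1) + x^2^(r+1)*x^2 + y^2)*h2F
    · refine parQuad_rep_eq_zero _ ?_ P hP
      unfold parQuad
      norm_num
      rfl
  · intro W hW
    by_contra hcon
    push_neg at hcon
    haveI : Finite (Projectivization F (Fin 5 → F)) := Quotient.finite _
    have hfin : {P | P ∈ suzukiTitsQ4 F r ∧ P.rep ∈ W}.Finite := Set.toFinite _
    obtain ⟨P₁, P₂, P₃, hP1, hP2, hP3, h12, h13, h23⟩ := (Set.two_lt_ncard_iff hfin).mp hcon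
    obtain ⟨hm1, hw1⟩ := hP1
    obtain ⟨hm2, hw2⟩ := hP2
    obtain ⟨hm3, hw3⟩ := hP3
    simp only [suzukiTitsQ4, Set.mem_union, Set.mem_setOf_eq, Set.mem_singleton_iff]
      at hm1 hm2 hm3
    rcases hm1 with ⟨x1, y1, rfl⟩ | rfl <;> rcases hm2 with ⟨x2, y2, rfl⟩ | rfl <;>
      rcases hm3 with ⟨x3, y3, rfl⟩ | rfl
    · exact lemB (2^(r+1)) hk h2F hadd hkk hW x1 y1 x2 y2 x3 y3
        (mem_of_mk_rep_mem _ hw1) (mem_of_mk_rep_mem _ hw2) (mem_of_mk_rep_mem _ hw3)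
        (fun ⟨u, v⟩ => h12 (by rw [u, v])) (fun ⟨u, v⟩ => h13 (by rw [u, v]))
        (fun ⟨u, v⟩ => h23 (by rw [u, v]))
    · exact lemA hW x1 y1 x2 y2 _ _ _ _ (mem_of_mk_rep_mem _ hw3)
        (mem_of_mk_rep_mem _ hw1) (mem_of_mk_rep_mem _ hw2)
        (fun ⟨u, v⟩ => h12 (by rw [u, v]))
    · exact lemA hW x1 y1 x3 y3 _ _ _ _ (mem_of_mk_rep_mem _ hw2)
        (mem_of_mk_rep_mem _ hw1) (mem_of_mk_rep_mem _ hw3)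
        (fun ⟨u, v⟩ => h13 (by rw [u, v]))
    · exact h23 rfl
    · exact lemA hW x2 y2 x3 y3 _ _ _ _ (mem_of_mk_rep_mem _ hw1)
        (mem_of_mk_rep_mem _ hw2) (mem_of_mk_rep_mem _ hw3)
        (fun ⟨u, v⟩ => h23 (by rw [u, v]))
    · exact h13 rfl
    · exact h12 rfl
    · exact h12 rfl
end

section
/- Let C be the twisted cubic of PG(3,q) and U₂ = (0,1,0,0). Projecting C from U₂ onto the plane X₂ = 0 yields the q+1 points of the plane cubic curve X₁X₄² - X₃³ = 0 (in coordinates X₁, X₃, X₄ on that plane). Moreover the set X = C ∪ {U₂} has no three points collinear and no five points coplanar. -/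
open Projectivization

theorem vec4_ne_zero_snd {F : Type*} [Field F] :
    (![0, 1, 0, 0] : Fin 4 → F) ≠ 0 := by
  intro h
  have := congrFun h 1
  simp at this

/-- The twisted cubic `C = {(1,t,t²,t³)} ∪ {(0,0,0,1)}` of `PG(3,q)`. -/
noncomputable def twistedCubic (F : Type*) [Field F] :
    Set (Projectivization F (Fin 4 → F)) :=
  {P | ∃ t : F, P = Projectivization.mk F ![1, t, t ^ 2, t ^ 3]
      (vec4_ne_zero_fst t (t ^ 2) (t ^ 3))}
    ∪ {Projectivization.mk F ![0, 0, 0, 1] vec4_ne_zero_last}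

/-- The cone over the twisted cubic. -/
def twistedCubicCone (F : Type*) [Field F] : Set (Fin 4 → F) :=
  {v | ∃ c : F, c ≠ 0 ∧
    ((∃ t : F, v = c • ![1, t, t ^ 2, t ^ 3]) ∨ v = c • ![0, 0, 0, 1])}

/-- The point `U₂ = (0,1,0,0)`. -/
noncomputable def ptU2 (F : Type*) [Field F] : Projectivization F (Fin 4 → F) :=
  Projectivization.mk F ![0, 1, 0, 0] vec4_ne_zero_snd


open Projectivization Submodule Module

namespace S15

variable {F : Type*} [Field F]

lemma cancel2 {u v w : F} (h : u * (v * w) = 0) (hv : v ≠ 0) (hw : w ≠ 0) : u = 0 := by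
  rcases mul_eq_zero.1 h with h | h
  · exact h
  · exact absurd h (mul_ne_zero hv hw)

lemma cancel3 {u v w x : F} (h : u * (v * (w * x)) = 0) (hv : v ≠ 0) (hw : w ≠ 0)
    (hx : x ≠ 0) : u = 0 :=
  cancel2 h hv (mul_ne_zero hw hx)

lemma param_sol {a b d : F} (ha : a ≠ 0) (h : a * d ^ 2 - b ^ 3 = 0) :
    ∃ s : F, a * s ^ 2 = b ∧ a * s ^ 3 = d := by
  by_cases hb : b = 0
  · have hd2 : d ^ 2 = 0 := by
      rcases mul_eq_zero.1 (show a * d ^ 2 = 0 by rw [sub_eq_zero.1 h, hb]; ring) with h | h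
      · exact absurd h ha
      · exact h
    have hd : d = 0 := pow_eq_zero_iff two_ne_zero |>.1 hd2
    exact ⟨0, by simp [hb, hd]⟩
  · refine ⟨d / b, ?_, ?_⟩
    · field_simp
      linear_combination h
    · field_simp
      linear_combination d * h

lemma sq_cube_inj {s r : F} (h2 : s ^ 2 = r ^ 2) (h3 : s ^ 3 = r ^ 3) : s = r := by
  by_cases hr : r = 0
  · subst hr
    simpa using pow_eq_zero_iff two_ne_zero |>.1 (by simpa using h2)
  · have : (s - r) * r ^ 2 = 0 := by linear_combination h3 - s * h2
    rcases mul_eq_zero.1 this with h | h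
    · exact sub_eq_zero.1 h
    · exact absurd h (pow_ne_zero 2 hr)

lemma li_ttt {t₁ t₂ t₃ : F} (h12 : t₁ ≠ t₂) (h13 : t₁ ≠ t₃) (h23 : t₂ ≠ t₃) :
    LinearIndependent F ![(![1,t₁,t₁^2,t₁^3] : Fin 4 → F), ![1,t₂,t₂^2,t₂^3], ![1,t₃,t₃^2,t₃^3]] := by
  rw [Fintype.linearIndependent_iff]
  intro g hg
  have h0 := congrFun hg 0
  have h1 := congrFun hg 1
  have h2 := congrFun hg 2
  simp [Fin.sum_univ_three, Matrix.vecHead, Matrix.vecTail] at h0 h1 h2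
  have hg0 : g 0 = 0 := cancel2 (show g 0 * ((t₁ - t₂) * (t₁ - t₃)) = 0 by
    linear_combination t₂*t₃*h0 - (t₂+t₃)*h1 + h2) (sub_ne_zero.2 h12) (sub_ne_zero.2 h13)
  have hg1 : g 1 = 0 := cancel2 (show g 1 * ((t₂ - t₁) * (t₂ - t₃)) = 0 by
    linear_combination t₁*t₃*h0 - (t₁+t₃)*h1 + h2) (sub_ne_zero.2 h12.symm) (sub_ne_zero.2 h23)
  have hg2 : g 2 = 0 := cancel2 (show g 2 * ((t₃ - t₁) * (t₃ - t₂)) = 0 by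
    linear_combination t₁*t₂*h0 - (t₁+t₂)*h1 + h2) (sub_ne_zero.2 h13.symm) (sub_ne_zero.2 h23.symm)
  intro i
  fin_cases i <;> assumption

lemma li_ttV {t₁ t₂ : F} (h12 : t₁ ≠ t₂) :
    LinearIndependent F ![(![1,t₁,t₁^2,t₁^3] : Fin 4 → F), ![1,t₂,t₂^2,t₂^3], ![0,0,0,1]] := by
  rw [Fintype.linearIndependent_iff]
  intro g hg
  have h0 := congrFun hg 0
  have h1 := congrFun hg 1
  have h3 := congrFun hg 3
  simp [Fin.sum_univ_three, Matrix.vecHead, Matrix.vecTail] at h0 h1 h3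
  have hg0 : g 0 = 0 := by
    rcases mul_eq_zero.1 (show g 0 * (t₁ - t₂) = 0 by linear_combination h1 - t₂ * h0) with h | h
    · exact h
    · exact absurd h (sub_ne_zero.2 h12)
  have hg1 : g 1 = 0 := by linear_combination h0 - hg0
  have hg2 : g 2 = 0 := by linear_combination h3 - t₁^3 * hg0 - t₂^3 * hg1
  intro i
  fin_cases i <;> assumption

lemma li_ttU {t₁ t₂ : F} (h12 : t₁ ≠ t₂) :
    LinearIndependent F ![(![1,t₁,t₁^2,t₁^3] : Fin 4 → F), ![1,t₂,t₂^2,t₂^3], ![0,1,0,0]] := by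
  rw [Fintype.linearIndependent_iff]
  intro g hg
  have h0 := congrFun hg 0
  have h1 := congrFun hg 1
  have h2 := congrFun hg 2
  have h3 := congrFun hg 3
  simp [Fin.sum_univ_three, Matrix.vecHead, Matrix.vecTail] at h0 h1 h2 h3
  have hg01 : g 0 = 0 ∧ g 1 = 0 := by
    by_cases ht1 : t₁ = 0
    · subst ht1
      have ht2 : t₂ ≠ 0 := fun h => h12 h.symm
      have hg1 : g 1 = 0 := cancel2 (show g 1 * (t₂ * t₂) = 0 by linear_combination h2) ht2 ht2
      exact ⟨by linear_combination h0 - hg1, hg1⟩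
    · have hg0 : g 0 = 0 := cancel3 (show g 0 * (t₁ * (t₁ * (t₁ - t₂))) = 0 by
        linear_combination h3 - t₂ * h2) ht1 ht1 (sub_ne_zero.2 h12)
      exact ⟨hg0, by linear_combination h0 - hg0⟩
  obtain ⟨hg0, hg1⟩ := hg01
  have hg2 : g 2 = 0 := by linear_combination h1 - t₁ * hg0 - t₂ * hg1
  intro i
  fin_cases i <;> assumption

lemma li_tVU (t : F) :
    LinearIndependent F ![(![1,t,t^2,t^3] : Fin 4 → F), ![0,0,0,1], ![0,1,0,0]] := by
  rw [Fintype.linearIndependent_iff]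
  intro g hg
  have h0 := congrFun hg 0
  have h1 := congrFun hg 1
  have h3 := congrFun hg 3
  simp [Fin.sum_univ_three, Matrix.vecHead, Matrix.vecTail] at h0 h1 h3
  have hg1 : g 1 = 0 := by linear_combination h3 - t^3 * h0
  have hg2 : g 2 = 0 := by linear_combination h1 - t * h0
  intro i
  fin_cases i <;> assumption

lemma li_tttt {t₁ t₂ t₃ t₄ : F} (h12 : t₁ ≠ t₂) (h13 : t₁ ≠ t₃) (h14 : t₁ ≠ t₄)
    (h23 : t₂ ≠ t₃) (h24 : t₂ ≠ t₄) (h34 : t₃ ≠ t₄) :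
    LinearIndependent F ![(![1,t₁,t₁^2,t₁^3] : Fin 4 → F), ![1,t₂,t₂^2,t₂^3],
      ![1,t₃,t₃^2,t₃^3], ![1,t₄,t₄^2,t₄^3]] := by
  rw [Fintype.linearIndependent_iff]
  intro g hg
  have h0 := congrFun hg 0
  have h1 := congrFun hg 1
  have h2 := congrFun hg 2
  have h3 := congrFun hg 3
  simp [Fin.sum_univ_four, Matrix.vecHead, Matrix.vecTail] at h0 h1 h2 h3
  have hg0 : g 0 = 0 := cancel3 (show g 0 * ((t₁-t₂) * ((t₁-t₃) * (t₁-t₄))) = 0 by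
      linear_combination h3 - (t₂+t₃+t₄)*h2 + (t₂*t₃+t₂*t₄+t₃*t₄)*h1 - t₂*t₃*t₄*h0)
    (sub_ne_zero.2 h12) (sub_ne_zero.2 h13) (sub_ne_zero.2 h14)
  have hg1 : g 1 = 0 := cancel3 (show g 1 * ((t₂-t₁) * ((t₂-t₃) * (t₂-t₄))) = 0 by
      linear_combination h3 - (t₁+t₃+t₄)*h2 + (t₁*t₃+t₁*t₄+t₃*t₄)*h1 - t₁*t₃*t₄*h0)
    (sub_ne_zero.2 h12.symm) (sub_ne_zero.2 h23) (sub_ne_zero.2 h24)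
  have hg2 : g 2 = 0 := cancel3 (show g 2 * ((t₃-t₁) * ((t₃-t₂) * (t₃-t₄))) = 0 by
      linear_combination h3 - (t₁+t₂+t₄)*h2 + (t₁*t₂+t₁*t₄+t₂*t₄)*h1 - t₁*t₂*t₄*h0)
    (sub_ne_zero.2 h13.symm) (sub_ne_zero.2 h23.symm) (sub_ne_zero.2 h34)
  have hg3 : g 3 = 0 := cancel3 (show g 3 * ((t₄-t₁) * ((t₄-t₂) * (t₄-t₃))) = 0 by
      linear_combination h3 - (t₁+t₂+t₃)*h2 + (t₁*t₂+t₁*t₃+t₂*t₃)*h1 - t₁*t₂*t₃*h0)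
    (sub_ne_zero.2 h14.symm) (sub_ne_zero.2 h24.symm) (sub_ne_zero.2 h34.symm)
  intro i
  fin_cases i <;> assumption

lemma li_tttV {t₁ t₂ t₃ : F} (h12 : t₁ ≠ t₂) (h13 : t₁ ≠ t₃) (h23 : t₂ ≠ t₃) :
    LinearIndependent F ![(![1,t₁,t₁^2,t₁^3] : Fin 4 → F), ![1,t₂,t₂^2,t₂^3],
      ![1,t₃,t₃^2,t₃^3], ![0,0,0,1]] := by
  rw [Fintype.linearIndependent_iff]
  intro g hg
  have h0 := congrFun hg 0
  have h1 := congrFun hg 1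
  have h2 := congrFun hg 2
  have h3 := congrFun hg 3
  simp [Fin.sum_univ_four, Matrix.vecHead, Matrix.vecTail] at h0 h1 h2 h3
  have hg0 : g 0 = 0 := cancel2 (show g 0 * ((t₁ - t₂) * (t₁ - t₃)) = 0 by
    linear_combination t₂*t₃*h0 - (t₂+t₃)*h1 + h2) (sub_ne_zero.2 h12) (sub_ne_zero.2 h13)
  have hg1 : g 1 = 0 := cancel2 (show g 1 * ((t₂ - t₁) * (t₂ - t₃)) = 0 by
    linear_combination t₁*t₃*h0 - (t₁+t₃)*h1 + h2) (sub_ne_zero.2 h12.symm) (sub_ne_zero.2 h23)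
  have hg2 : g 2 = 0 := cancel2 (show g 2 * ((t₃ - t₁) * (t₃ - t₂)) = 0 by
    linear_combination t₁*t₂*h0 - (t₁+t₂)*h1 + h2) (sub_ne_zero.2 h13.symm) (sub_ne_zero.2 h23.symm)
  have hg3 : g 3 = 0 := by linear_combination h3 - t₁^3*hg0 - t₂^3*hg1 - t₃^3*hg2
  intro i
  fin_cases i <;> assumption

lemma finrank3 {x y z : Fin 4 → F} (h : LinearIndependent F ![x, y, z])
    (a b c : Fˣ) (S : Set (Fin 4 → F)) (hS : S = {a • x, b • y, c • z}) :
    finrank F (span F S) = 3 := by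
  have h2 : LinearIndependent F ![a • x, b • y, c • z] := by
    have := h.units_smul ![a, b, c]
    convert this using 1
    funext i; fin_cases i <;> rfl
  have hr : ({a • x, b • y, c • z} : Set (Fin 4 → F)) = Set.range ![a • x, b • y, c • z] := by
    ext u; simp; try tauto
  rw [hS, hr, finrank_span_eq_card h2, Fintype.card_fin]

lemma li_perm {x y z x' y' z' : Fin 4 → F} (h : LinearIndependent F ![x, y, z])
    (σ : Fin 3 → Fin 3) (hσ : Function.Injective σ)
    (he : ![x', y', z'] = ![x, y, z] ∘ σ) : LinearIndependent F ![x', y', z'] :=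
  he ▸ h.comp σ hσ

lemma rep_span3 {x y z : Fin 4 → F} (hx : x ≠ 0) (hy : y ≠ 0) (hz : z ≠ 0)
    (h : LinearIndependent F ![x, y, z]) :
    finrank F (span F {(Projectivization.mk F x hx).rep, (Projectivization.mk F y hy).rep,
      (Projectivization.mk F z hz).rep}) = 3 := by
  obtain ⟨a, ha⟩ := exists_smul_eq_mk_rep F x hx
  obtain ⟨b, hb⟩ := exists_smul_eq_mk_rep F y hy
  obtain ⟨c, hc⟩ := exists_smul_eq_mk_rep F z hz
  exact finrank3 h a b c _ (by rw [ha, hb, hc])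

lemma span4_top {x y z w : Fin 4 → F} (h : LinearIndependent F ![x, y, z, w])
    (a b c d : Fˣ) (S : Set (Fin 4 → F)) (hx : a • x ∈ S) (hy : b • y ∈ S)
    (hz : c • z ∈ S) (hw : d • w ∈ S) : span F S = ⊤ := by
  have htop : span F (Set.range ![x, y, z, w]) = ⊤ :=
    h.span_eq_top_of_card_eq_finrank (by simp)
  have key : ∀ (u : Fin 4 → F) (e : Fˣ), e • u ∈ S → u ∈ span F S := by
    intro u e he
    have h1 : (e : F) • u ∈ span F S := subset_span he
    have h2 := Submodule.smul_mem (span F S) ((e⁻¹ : Fˣ) : F) h1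
    rwa [← mul_smul, Units.inv_mul, one_smul] at h2
  rw [eq_top_iff, ← htop, span_le]
  rintro v ⟨i, rfl⟩
  fin_cases i
  · exact key x a hx
  · exact key y b hy
  · exact key z c hz
  · exact key w d hw

lemma ncard5_ne {α : Type*} {a b c d e : α} (h : ({a, b, c, d, e} : Set α).ncard = 5) :
    a ≠ b ∧ a ≠ c ∧ a ≠ d ∧ a ≠ e ∧ b ≠ c ∧ b ≠ d ∧ b ≠ e ∧ c ≠ d ∧ c ≠ e ∧ d ≠ e := by
  have key : ∀ x y z w : α, ({x, y, z, w} : Set α).ncard ≤ 4 := by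
    intro x y z w
    have h1 := Set.ncard_insert_le x ({y, z, w} : Set α)
    have h2 := Set.ncard_insert_le y ({z, w} : Set α)
    have h3 := Set.ncard_insert_le z ({w} : Set α)
    have h4 : ({w} : Set α).ncard = 1 := Set.ncard_singleton w
    simp only [Set.insert_eq] at *
    omega
  refine ⟨?_, ?_, ?_, ?_, ?_, ?_, ?_, ?_, ?_, ?_⟩ <;> rintro rfl
  · rw [show ({a, a, c, d, e} : Set α) = {a, c, d, e} by ext u; simp; try tauto] at h
    exact absurd h (by have := key a c d e; omega)
  · rw [show ({a, b, a, d, e} : Set α) = {a, b, d, e} by ext u; simp; try tauto] at h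
    exact absurd h (by have := key a b d e; omega)
  · rw [show ({a, b, c, a, e} : Set α) = {a, b, c, e} by ext u; simp; try tauto] at h
    exact absurd h (by have := key a b c e; omega)
  · rw [show ({a, b, c, d, a} : Set α) = {a, b, c, d} by ext u; simp; try tauto] at h
    exact absurd h (by have := key a b c d; omega)
  · rw [show ({a, b, b, d, e} : Set α) = {a, b, d, e} by ext u; simp; try tauto] at h
    exact absurd h (by have := key a b d e; omega)
  · rw [show ({a, b, c, b, e} : Set α) = {a, b, c, e} by ext u; simp; try tauto] at h
    exact absurd h (by have := key a b c e; omega)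
  · rw [show ({a, b, c, d, b} : Set α) = {a, b, c, d} by ext u; simp; try tauto] at h
    exact absurd h (by have := key a b c d; omega)
  · rw [show ({a, b, c, c, e} : Set α) = {a, b, c, e} by ext u; simp; try tauto] at h
    exact absurd h (by have := key a b c e; omega)
  · rw [show ({a, b, c, d, c} : Set α) = {a, b, c, d} by ext u; simp; try tauto] at h
    exact absurd h (by have := key a b c d; omega)
  · rw [show ({a, b, c, d, d} : Set α) = {a, b, c, d} by ext u; simp; try tauto] at h
    exact absurd h (by have := key a b c d; omega)

lemma mk_t_ne {t s : F}
    (h : Projectivization.mk F ![1, t, t ^ 2, t ^ 3] (vec4_ne_zero_fst t (t ^ 2) (t ^ 3)) ≠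
      Projectivization.mk F ![1, s, s ^ 2, s ^ 3] (vec4_ne_zero_fst s (s ^ 2) (s ^ 3))) :
    t ≠ s := fun he => h (by rw [he])

lemma part1 : ((fun v : Fin 4 → F => Function.update v 1 0) '' twistedCubicCone F =
      {w : Fin 4 → F | w ≠ 0 ∧ w 1 = 0 ∧ w 0 * w 3 ^ 2 - w 2 ^ 3 = 0}) := by
  ext w
  constructor
  · rintro ⟨v, ⟨c, hc, hv⟩, rfl⟩
    rcases hv with ⟨t, rfl⟩ | rfl
    · refine ⟨?_, ?_, ?_⟩
      · intro h
        have := congrFun h 0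
        simp [Function.update] at this
        exact hc this
      · simp [Function.update]
      · simp [Function.update]
        ring
    · refine ⟨?_, ?_, ?_⟩
      · intro h
        have := congrFun h 3
        simp [Function.update] at this
        exact hc this
      · simp [Function.update]
      · simp [Function.update]
  · rintro ⟨hw0, hw1, hw⟩
    by_cases h0 : w 0 = 0
    · have h2 : w 2 = 0 := by
        have : w 2 ^ 3 = 0 := by linear_combination w 3 ^ 2 * h0 - hw
        exact pow_eq_zero_iff three_ne_zero |>.1 this
      have h3 : w 3 ≠ 0 := by
        intro h3
        apply hw0
        funext i; fin_cases i <;> simp [h0, hw1, h2, h3]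
      refine ⟨w 3 • ![0, 0, 0, 1], ⟨w 3, h3, Or.inr rfl⟩, ?_⟩
      funext i
      fin_cases i <;> simp [Function.update, h0, hw1, h2]
    · obtain ⟨s, hs2, hs3⟩ := param_sol h0 hw
      refine ⟨w 0 • ![1, s, s ^ 2, s ^ 3], ⟨w 0, h0, Or.inl ⟨s, rfl⟩⟩, ?_⟩
      funext i
      fin_cases i <;> simp [Function.update, hw1, hs2, hs3]

noncomputable def gmap (F : Type*) [Field F] : Option F → Projectivization F (Fin 4 → F)
  | none => Projectivization.mk F ![0, 0, 0, 1] vec4_ne_zero_last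
  | some s => Projectivization.mk F ![1, 0, s ^ 2, s ^ 3] (vec4_ne_zero_fst 0 (s^2) (s^3))

lemma gmap_inj : Function.Injective (gmap F) := by
  intro x y h
  match x, y with
  | none, none => rfl
  | none, some s =>
    rw [gmap, gmap, mk_eq_mk_iff] at h
    obtain ⟨a, ha⟩ := h
    have h0 := congrFun ha 0
    simp [Units.smul_def] at h0
  | some s, none =>
    rw [gmap, gmap, mk_eq_mk_iff] at h
    obtain ⟨a, ha⟩ := h
    have h0 := congrFun ha 0
    simp [Units.smul_def] at h0
  | some s, some r =>
    rw [gmap, gmap, mk_eq_mk_iff] at h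
    obtain ⟨a, ha⟩ := h
    have h0 := congrFun ha 0
    have h2 := congrFun ha 2
    have h3 := congrFun ha 3
    simp [Units.smul_def] at h0 h2 h3
    rw [h0] at h2 h3
    norm_num at h2 h3
    exact congrArg some (sq_cube_inj h2.symm h3.symm)

lemma part2 [Fintype F] :
    {P : Projectivization F (Fin 4 → F) |
      P.rep 1 = 0 ∧ P.rep 0 * P.rep 3 ^ 2 - P.rep 2 ^ 3 = 0}.ncard =
      Fintype.card F + 1 := by
  have hset : {P : Projectivization F (Fin 4 → F) |
      P.rep 1 = 0 ∧ P.rep 0 * P.rep 3 ^ 2 - P.rep 2 ^ 3 = 0} = Set.range (gmap F) := by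
    ext P
    simp only [Set.mem_setOf_eq, Set.mem_range]
    constructor
    · rintro ⟨h1, h2⟩
      by_cases h0 : P.rep 0 = 0
      · have hc2 : P.rep 2 = 0 := by
          have : P.rep 2 ^ 3 = 0 := by linear_combination P.rep 3 ^ 2 * h0 - h2
          exact pow_eq_zero_iff three_ne_zero |>.1 this
        have h3 : P.rep 3 ≠ 0 := by
          intro h3
          apply P.rep_nonzero
          funext i; fin_cases i <;> simp [h0, h1, hc2, h3]
        refine ⟨none, ?_⟩
        rw [gmap, ← P.mk_rep, mk_eq_mk_iff']
        refine ⟨(P.rep 3)⁻¹, ?_⟩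
        funext i
        fin_cases i <;> simp [h0, h1, hc2, inv_mul_cancel₀ h3]
      · obtain ⟨s, hs2, hs3⟩ := param_sol h0 h2
        refine ⟨some s, ?_⟩
        rw [gmap, ← P.mk_rep, mk_eq_mk_iff']
        refine ⟨(P.rep 0)⁻¹, ?_⟩
        funext i
        fin_cases i <;>
          simp [h1, ← hs2, ← hs3, inv_mul_cancel₀ h0, inv_mul_cancel_left₀ h0]
    · rintro ⟨x, rfl⟩
      match x with
      | none =>
        obtain ⟨a, ha⟩ := exists_smul_eq_mk_rep F (![0,0,0,1] : Fin 4 → F) vec4_ne_zero_last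
        rw [gmap, ← ha]
        constructor <;> simp [Units.smul_def]
      | some s =>
        obtain ⟨a, ha⟩ := exists_smul_eq_mk_rep F (![1,0,s^2,s^3] : Fin 4 → F)
          (vec4_ne_zero_fst 0 (s^2) (s^3))
        rw [gmap, ← ha]
        refine ⟨by simp [Units.smul_def], ?_⟩
        simp [Units.smul_def]
        ring
  rw [hset, ← Set.image_univ, Set.ncard_image_of_injective _ gmap_inj, Set.ncard_univ,
    Nat.card_eq_fintype_card, Fintype.card_option]

lemma part3 (P : Projectivization F (Fin 4 → F)) (hP : P ∈ twistedCubic F ∪ {ptU2 F})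
    (Q : Projectivization F (Fin 4 → F)) (hQ : Q ∈ twistedCubic F ∪ {ptU2 F})
    (R : Projectivization F (Fin 4 → F)) (hR : R ∈ twistedCubic F ∪ {ptU2 F})
    (hPQ : P ≠ Q) (hPR : P ≠ R) (hQR : Q ≠ R) :
    finrank F (span F {P.rep, Q.rep, R.rep}) = 3 := by
  simp only [twistedCubic, ptU2, Set.mem_union, Set.mem_setOf_eq,
    Set.mem_singleton_iff] at hP hQ hR
  rcases hP with (⟨t₁, rfl⟩ | rfl) | rfl <;> rcases hQ with (⟨t₂, rfl⟩ | rfl) | rfl <;>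
    rcases hR with (⟨t₃, rfl⟩ | rfl) | rfl
  · exact rep_span3 _ _ _ (li_ttt (mk_t_ne hPQ) (mk_t_ne hPR)
      (mk_t_ne hQR))
  · exact rep_span3 _ _ _ (li_ttV (mk_t_ne hPQ))
  · exact rep_span3 _ _ _ (li_ttU (mk_t_ne hPQ))
  · exact rep_span3 _ _ _ (li_perm (li_ttV (mk_t_ne hPR)) ![0,2,1] (by decide)
      (by funext i; fin_cases i <;> rfl))
  · exact absurd rfl hQR
  · exact rep_span3 _ _ _ (li_tVU t₁)
  · exact rep_span3 _ _ _ (li_perm (li_ttU (mk_t_ne hPR)) ![0,2,1] (by decide)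
      (by funext i; fin_cases i <;> rfl))
  · exact rep_span3 _ _ _ (li_perm (li_tVU t₁) ![0,2,1] (by decide)
      (by funext i; fin_cases i <;> rfl))
  · exact absurd rfl hQR
  · exact rep_span3 _ _ _ (li_perm (li_ttV (mk_t_ne hQR)) ![2,0,1] (by decide)
      (by funext i; fin_cases i <;> rfl))
  · exact absurd rfl hPR
  · exact rep_span3 _ _ _ (li_perm (li_tVU t₂) ![1,0,2] (by decide)
      (by funext i; fin_cases i <;> rfl))
  · exact absurd rfl hPQ
  · exact absurd rfl hPQ
  · exact absurd rfl hPQ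
  · exact rep_span3 _ _ _ (li_perm (li_tVU t₃) ![1,2,0] (by decide)
      (by funext i; fin_cases i <;> rfl))
  · exact absurd rfl hPR
  · exact absurd rfl hQR
  · exact rep_span3 _ _ _ (li_perm (li_ttU (mk_t_ne hQR)) ![2,0,1] (by decide)
      (by funext i; fin_cases i <;> rfl))
  · exact rep_span3 _ _ _ (li_perm (li_tVU t₂) ![2,0,1] (by decide)
      (by funext i; fin_cases i <;> rfl))
  · exact absurd rfl hPR
  · exact rep_span3 _ _ _ (li_perm (li_tVU t₃) ![2,1,0] (by decide)
      (by funext i; fin_cases i <;> rfl))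
  · exact absurd rfl hQR
  · exact absurd rfl hPR
  · exact absurd rfl hPQ
  · exact absurd rfl hPQ
  · exact absurd rfl hPQ

lemma spanC4 (Q₁ Q₂ Q₃ Q₄ : Projectivization F (Fin 4 → F))
    (h₁ : Q₁ ∈ twistedCubic F) (h₂ : Q₂ ∈ twistedCubic F)
    (h₃ : Q₃ ∈ twistedCubic F) (h₄ : Q₄ ∈ twistedCubic F)
    (d12 : Q₁ ≠ Q₂) (d13 : Q₁ ≠ Q₃) (d14 : Q₁ ≠ Q₄)
    (d23 : Q₂ ≠ Q₃) (d24 : Q₂ ≠ Q₄) (d34 : Q₃ ≠ Q₄)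
    (S : Set (Fin 4 → F)) (m₁ : Q₁.rep ∈ S) (m₂ : Q₂.rep ∈ S)
    (m₃ : Q₃.rep ∈ S) (m₄ : Q₄.rep ∈ S) :
    span F S = ⊤ := by
  simp only [twistedCubic, Set.mem_union, Set.mem_setOf_eq,
    Set.mem_singleton_iff] at h₁ h₂ h₃ h₄
  rcases h₁ with ⟨t₁, rfl⟩ | rfl <;> rcases h₂ with ⟨t₂, rfl⟩ | rfl <;>
    rcases h₃ with ⟨t₃, rfl⟩ | rfl <;> rcases h₄ with ⟨t₄, rfl⟩ | rfl
  · obtain ⟨a₁, ha₁⟩ := exists_smul_eq_mk_rep F _ (vec4_ne_zero_fst t₁ (t₁^2) (t₁^3))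
    obtain ⟨a₂, ha₂⟩ := exists_smul_eq_mk_rep F _ (vec4_ne_zero_fst t₂ (t₂^2) (t₂^3))
    obtain ⟨a₃, ha₃⟩ := exists_smul_eq_mk_rep F _ (vec4_ne_zero_fst t₃ (t₃^2) (t₃^3))
    obtain ⟨a₄, ha₄⟩ := exists_smul_eq_mk_rep F _ (vec4_ne_zero_fst t₄ (t₄^2) (t₄^3))
    rw [← ha₁] at m₁; rw [← ha₂] at m₂; rw [← ha₃] at m₃; rw [← ha₄] at m₄
    exact span4_top (li_tttt (mk_t_ne d12) (mk_t_ne d13)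
      (mk_t_ne d14) (mk_t_ne d23) (mk_t_ne d24)
      (mk_t_ne d34)) a₁ a₂ a₃ a₄ S m₁ m₂ m₃ m₄
  · obtain ⟨a₁, ha₁⟩ := exists_smul_eq_mk_rep F _ (vec4_ne_zero_fst t₁ (t₁^2) (t₁^3))
    obtain ⟨a₂, ha₂⟩ := exists_smul_eq_mk_rep F _ (vec4_ne_zero_fst t₂ (t₂^2) (t₂^3))
    obtain ⟨a₃, ha₃⟩ := exists_smul_eq_mk_rep F _ (vec4_ne_zero_fst t₃ (t₃^2) (t₃^3))
    obtain ⟨a₄, ha₄⟩ := exists_smul_eq_mk_rep F (![0,0,0,1] : Fin 4 → F) vec4_ne_zero_last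
    rw [← ha₁] at m₁; rw [← ha₂] at m₂; rw [← ha₃] at m₃; rw [← ha₄] at m₄
    exact span4_top (li_tttV (mk_t_ne d12) (mk_t_ne d13)
      (mk_t_ne d23)) a₁ a₂ a₃ a₄ S m₁ m₂ m₃ m₄
  · obtain ⟨a₁, ha₁⟩ := exists_smul_eq_mk_rep F _ (vec4_ne_zero_fst t₁ (t₁^2) (t₁^3))
    obtain ⟨a₂, ha₂⟩ := exists_smul_eq_mk_rep F _ (vec4_ne_zero_fst t₂ (t₂^2) (t₂^3))
    obtain ⟨a₃, ha₃⟩ := exists_smul_eq_mk_rep F (![0,0,0,1] : Fin 4 → F) vec4_ne_zero_last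
    obtain ⟨a₄, ha₄⟩ := exists_smul_eq_mk_rep F _ (vec4_ne_zero_fst t₄ (t₄^2) (t₄^3))
    rw [← ha₁] at m₁; rw [← ha₂] at m₂; rw [← ha₃] at m₃; rw [← ha₄] at m₄
    exact span4_top (li_tttV (mk_t_ne d12) (mk_t_ne d14)
      (mk_t_ne d24)) a₁ a₂ a₄ a₃ S m₁ m₂ m₄ m₃
  · exact absurd rfl d34
  · obtain ⟨a₁, ha₁⟩ := exists_smul_eq_mk_rep F _ (vec4_ne_zero_fst t₁ (t₁^2) (t₁^3))
    obtain ⟨a₂, ha₂⟩ := exists_smul_eq_mk_rep F (![0,0,0,1] : Fin 4 → F) vec4_ne_zero_last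
    obtain ⟨a₃, ha₃⟩ := exists_smul_eq_mk_rep F _ (vec4_ne_zero_fst t₃ (t₃^2) (t₃^3))
    obtain ⟨a₄, ha₄⟩ := exists_smul_eq_mk_rep F _ (vec4_ne_zero_fst t₄ (t₄^2) (t₄^3))
    rw [← ha₁] at m₁; rw [← ha₂] at m₂; rw [← ha₃] at m₃; rw [← ha₄] at m₄
    exact span4_top (li_tttV (mk_t_ne d13) (mk_t_ne d14)
      (mk_t_ne d34)) a₁ a₃ a₄ a₂ S m₁ m₃ m₄ m₂
  · exact absurd rfl d24
  · exact absurd rfl d23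
  · exact absurd rfl d23
  · obtain ⟨a₁, ha₁⟩ := exists_smul_eq_mk_rep F (![0,0,0,1] : Fin 4 → F) vec4_ne_zero_last
    obtain ⟨a₂, ha₂⟩ := exists_smul_eq_mk_rep F _ (vec4_ne_zero_fst t₂ (t₂^2) (t₂^3))
    obtain ⟨a₃, ha₃⟩ := exists_smul_eq_mk_rep F _ (vec4_ne_zero_fst t₃ (t₃^2) (t₃^3))
    obtain ⟨a₄, ha₄⟩ := exists_smul_eq_mk_rep F _ (vec4_ne_zero_fst t₄ (t₄^2) (t₄^3))
    rw [← ha₁] at m₁; rw [← ha₂] at m₂; rw [← ha₃] at m₃; rw [← ha₄] at m₄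
    exact span4_top (li_tttV (mk_t_ne d23) (mk_t_ne d24)
      (mk_t_ne d34)) a₂ a₃ a₄ a₁ S m₂ m₃ m₄ m₁
  · exact absurd rfl d14
  · exact absurd rfl d13
  · exact absurd rfl d13
  · exact absurd rfl d12
  · exact absurd rfl d12
  · exact absurd rfl d12
  · exact absurd rfl d12

lemma part4 (P₁ : Projectivization F (Fin 4 → F)) (h₁ : P₁ ∈ twistedCubic F ∪ {ptU2 F})
    (P₂ : Projectivization F (Fin 4 → F)) (h₂ : P₂ ∈ twistedCubic F ∪ {ptU2 F})
    (P₃ : Projectivization F (Fin 4 → F)) (h₃ : P₃ ∈ twistedCubic F ∪ {ptU2 F})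
    (P₄ : Projectivization F (Fin 4 → F)) (h₄ : P₄ ∈ twistedCubic F ∪ {ptU2 F})
    (P₅ : Projectivization F (Fin 4 → F)) (h₅ : P₅ ∈ twistedCubic F ∪ {ptU2 F})
    (hcard : ({P₁, P₂, P₃, P₄, P₅} : Set (Projectivization F (Fin 4 → F))).ncard = 5) :
    span F {P₁.rep, P₂.rep, P₃.rep, P₄.rep, P₅.rep} = ⊤ := by
  obtain ⟨d12, d13, d14, d15, d23, d24, d25, d34, d35, d45⟩ := ncard5_ne hcard
  have hC : ∀ P : Projectivization F (Fin 4 → F), P ∈ twistedCubic F ∪ {ptU2 F} →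
      P ≠ ptU2 F → P ∈ twistedCubic F := by
    intro P h hne
    rcases h with h | h
    · exact h
    · exact absurd h hne
  by_cases e1 : P₁ = ptU2 F
  · exact spanC4 P₂ P₃ P₄ P₅ (hC _ h₂ (fun h => d12 (e1.trans h.symm)))
      (hC _ h₃ (fun h => d13 (e1.trans h.symm))) (hC _ h₄ (fun h => d14 (e1.trans h.symm)))
      (hC _ h₅ (fun h => d15 (e1.trans h.symm))) d23 d24 d25 d34 d35 d45 _
      (by simp) (by simp) (by simp) (by simp)
  by_cases e2 : P₂ = ptU2 F
  · exact spanC4 P₁ P₃ P₄ P₅ (hC _ h₁ (fun h => d12 (h.trans e2.symm)))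
      (hC _ h₃ (fun h => d23 (e2.trans h.symm))) (hC _ h₄ (fun h => d24 (e2.trans h.symm)))
      (hC _ h₅ (fun h => d25 (e2.trans h.symm))) d13 d14 d15 d34 d35 d45 _
      (by simp) (by simp) (by simp) (by simp)
  by_cases e3 : P₃ = ptU2 F
  · exact spanC4 P₁ P₂ P₄ P₅ (hC _ h₁ (fun h => d13 (h.trans e3.symm)))
      (hC _ h₂ (fun h => d23 (h.trans e3.symm))) (hC _ h₄ (fun h => d34 (e3.trans h.symm)))
      (hC _ h₅ (fun h => d35 (e3.trans h.symm))) d12 d14 d15 d24 d25 d45 _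
      (by simp) (by simp) (by simp) (by simp)
  by_cases e4 : P₄ = ptU2 F
  · exact spanC4 P₁ P₂ P₃ P₅ (hC _ h₁ (fun h => d14 (h.trans e4.symm)))
      (hC _ h₂ (fun h => d24 (h.trans e4.symm))) (hC _ h₃ (fun h => d34 (h.trans e4.symm)))
      (hC _ h₅ (fun h => d45 (e4.trans h.symm))) d12 d13 d15 d23 d25 d35 _
      (by simp) (by simp) (by simp) (by simp)
  · exact spanC4 P₁ P₂ P₃ P₄ (hC _ h₁ e1) (hC _ h₂ e2) (hC _ h₃ e3) (hC _ h₄ e4)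
      d12 d13 d14 d23 d24 d34 _
      (by simp) (by simp) (by simp) (by simp)

end S15

/-- projecting the twisted cubic from `U₂ = (0,1,0,0)` onto the
plane `X₂ = 0` yields exactly the `q+1` points of the plane cubic
`X₁X₄² - X₃³ = 0`, and the set `C ∪ {U₂}` has no three collinear points and no
five coplanar points. -/
theorem stmt15 (F : Type*) [Field F] [Fintype F] :
    ((fun v : Fin 4 → F => Function.update v 1 0) '' twistedCubicCone F =
      {w : Fin 4 → F | w ≠ 0 ∧ w 1 = 0 ∧ w 0 * w 3 ^ 2 - w 2 ^ 3 = 0}) ∧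
    {P : Projectivization F (Fin 4 → F) |
      P.rep 1 = 0 ∧ P.rep 0 * P.rep 3 ^ 2 - P.rep 2 ^ 3 = 0}.ncard =
      Fintype.card F + 1 ∧
    (∀ P ∈ twistedCubic F ∪ {ptU2 F}, ∀ Q ∈ twistedCubic F ∪ {ptU2 F},
      ∀ R ∈ twistedCubic F ∪ {ptU2 F}, P ≠ Q → P ≠ R → Q ≠ R →
      Module.finrank F (Submodule.span F {P.rep, Q.rep, R.rep}) = 3) ∧
    (∀ P₁ ∈ twistedCubic F ∪ {ptU2 F}, ∀ P₂ ∈ twistedCubic F ∪ {ptU2 F},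
      ∀ P₃ ∈ twistedCubic F ∪ {ptU2 F}, ∀ P₄ ∈ twistedCubic F ∪ {ptU2 F},
      ∀ P₅ ∈ twistedCubic F ∪ {ptU2 F},
      ({P₁, P₂, P₃, P₄, P₅} : Set (Projectivization F (Fin 4 → F))).ncard = 5 →
      Submodule.span F {P₁.rep, P₂.rep, P₃.rep, P₄.rep, P₅.rep} = ⊤) := by
  exact ⟨S15.part1, S15.part2, S15.part3, S15.part4⟩
end

section
/- Let q ≡ 0 (mod 3) be a prime power. The plane cubic curve D : X₂X₄² - X₃²X₄ - X₃³ = 0 in PG(2,q) has exactly q+1 points, has a cusp at (0,1,0,0), and has no inflexion points, i.e. there is no point of D other than the cusp at which the tangent line meets D with intersection multiplicity 3. -/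
open Projectivization

/-- The plane cubic `D : X₂X₄² - X₃²X₄ - X₃³ = 0`, in coordinates
`(X₂ : X₃ : X₄) = (w 0 : w 1 : w 2)`. -/
def cubicD {F : Type*} [Field F] (w : Fin 3 → F) : F :=
  w 0 * w 2 ^ 2 - w 1 ^ 2 * w 2 - w 1 ^ 3

/-- The gradient of `cubicD`. -/
def cubicDGrad {F : Type*} [Field F] (w : Fin 3 → F) : Fin 3 → F :=
  ![w 2 ^ 2, -(2 * w 1 * w 2) - 3 * w 1 ^ 2, 2 * w 0 * w 2 - w 1 ^ 2]

theorem vec3_ne_zero_fst {F : Type*} [Field F] :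
    (![1, 0, 0] : Fin 3 → F) ≠ 0 := by
  intro h
  have := congrFun h 0
  simp at this

/-- The point `(1 : 0 : 0)` of `PG(2,q)`. -/
noncomputable def cuspPt (F : Type*) [Field F] : Projectivization F (Fin 3 → F) :=
  Projectivization.mk F (![1, 0, 0] : Fin 3 → F) vec3_ne_zero_fst

namespace Stmt16Aux

variable {F : Type*} [Field F]

lemma vecne (t : F) : (![t^2+t^3, t, 1] : Fin 3 → F) ≠ 0 := by
  intro h; have := congrFun h 2; simp at this

/-- The affine points of the cubic. -/
noncomputable def fpt (t : F) : Projectivization F (Fin 3 → F) :=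
  Projectivization.mk F ![t^2+t^3, t, 1] (vecne t)

lemma rep_eq_smul (P : Projectivization F (Fin 3 → F)) (v : Fin 3 → F) (hv : v ≠ 0)
    (h : P = Projectivization.mk F v hv) : ∃ c : F, c ≠ 0 ∧ P.rep = c • v := by
  have := (mk_eq_mk_iff F P.rep v P.rep_nonzero hv).1 (by rw [mk_rep, h])
  obtain ⟨a, ha⟩ := this
  exact ⟨a, a.ne_zero, by rw [← ha]; rfl⟩

lemma cubicD_smul (c : F) (w : Fin 3 → F) : cubicD (c • w) = c^3 * cubicD w := by
  simp [cubicD]; ring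

lemma fpt_inj : Function.Injective (fpt (F := F)) := by
  intro s t h
  rw [fpt, fpt, mk_eq_mk_iff'] at h
  obtain ⟨a, ha⟩ := h
  have h2 := congrFun ha 2
  have h1 := congrFun ha 1
  simp at h2 h1
  rw [h2] at h1; simpa using h1.symm

lemma fpt_ne_cusp (t : F) : fpt t ≠ cuspPt F := by
  intro h
  rw [fpt, cuspPt, mk_eq_mk_iff'] at h
  obtain ⟨a, ha⟩ := h
  have := congrFun ha 2
  simp at this

lemma cubicD_fpt (t : F) : cubicD (![t^2+t^3, t, 1] : Fin 3 → F) = 0 := by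
  simp only [cubicD, Matrix.cons_val_zero, Matrix.cons_val_one, Matrix.head_cons,
    Matrix.cons_val_two, Matrix.tail_cons]
  ring

lemma fpt_on (t : F) : cubicD (fpt t).rep = 0 := by
  obtain ⟨c, hc, hrep⟩ := rep_eq_smul (fpt t) _ (vecne t) rfl
  rw [hrep, cubicD_smul, cubicD_fpt, mul_zero]

lemma cusp_rep : ∃ c : F, c ≠ 0 ∧ (cuspPt F).rep = c • ![1, 0, 0] :=
  rep_eq_smul _ _ vec3_ne_zero_fst rfl

lemma cusp_on : cubicD (cuspPt F).rep = 0 := by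
  obtain ⟨c, hc, hrep⟩ := cusp_rep (F := F)
  rw [hrep, cubicD_smul]
  simp [cubicD]

/-- Membership characterization. -/
lemma mem_iff (P : Projectivization F (Fin 3 → F)) :
    cubicD P.rep = 0 ↔ P = cuspPt F ∨ ∃ t : F, P = fpt t := by
  constructor
  · intro h
    set v := P.rep with hv
    have hP : P = Projectivization.mk F v P.rep_nonzero := (mk_rep P).symm
    by_cases h2 : v 2 = 0
    · left
      have h1 : v 1 = 0 := by
        have hc3 : v 1 ^ 3 = 0 := by
          have hc := h; rw [cubicD, h2] at hc
          linear_combination -hc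
        exact pow_eq_zero_iff (n := 3) (by norm_num) |>.1 hc3
      have h0 : v 0 ≠ 0 := by
        intro h0
        apply P.rep_nonzero
        funext i; fin_cases i <;> simp [← hv, h0, h1, h2]
      have hveq : v = v 0 • ![1, 0, 0] := by
        funext i; fin_cases i <;> simp [h1, h2]
      rw [hP, cuspPt]
      rw [mk_eq_mk_iff']
      exact ⟨v 0, by rw [← hveq]⟩
    · right
      refine ⟨v 1 / v 2, ?_⟩
      have hveq : v = v 2 • ![(v 1 / v 2)^2+(v 1 / v 2)^3, v 1 / v 2, 1] := by
        have heq : v 0 * v 2 ^ 2 = v 1 ^ 2 * v 2 + v 1 ^ 3 := by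
          rw [cubicD] at h; linear_combination h
        funext i; fin_cases i
        · show v 0 = v 2 * ((v 1 / v 2)^2+(v 1 / v 2)^3)
          field_simp
          linear_combination heq
        · show v 1 = v 2 * (v 1 / v 2); field_simp
        · show v 2 = v 2 * 1; ring
      rw [hP, fpt, mk_eq_mk_iff']
      exact ⟨v 2, by rw [← hveq]⟩
  · rintro (rfl | ⟨t, rfl⟩)
    · exact cusp_on
    · exact fpt_on t

end Stmt16Aux

open Stmt16Aux in
/-- for `q ≡ 0 (mod 3)`, the plane cubic
`D : X₂X₄² - X₃²X₄ - X₃³ = 0` of `PG(2,q)` has exactly `q+1` points, has a cusp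
at `(1:0:0)` (it lies on `D`, all partial derivatives vanish there, and every
line through it meets `D` in at most one further point), and `D` has no
inflexion point: at every other point of `D` the tangent line meets `D` in a
second point. -/
theorem stmt16 (F : Type*) [Field F] [Fintype F]
    (hq : Fintype.card F % 3 = 0) :
    {P : Projectivization F (Fin 3 → F) | cubicD P.rep = 0}.ncard =
      Fintype.card F + 1 ∧
    (cubicD (cuspPt F).rep = 0 ∧
     cubicDGrad (cuspPt F).rep = 0 ∧
     ∀ L : Submodule F (Fin 3 → F), Module.finrank F L = 2 →
       (cuspPt F).rep ∈ L →
       {P : Projectivization F (Fin 3 → F) | cubicD P.rep = 0 ∧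
         P ≠ cuspPt F ∧ P.rep ∈ L}.ncard ≤ 1) ∧
    (∀ P : Projectivization F (Fin 3 → F), cubicD P.rep = 0 → P ≠ cuspPt F →
      ∃ Q : Projectivization F (Fin 3 → F), cubicD Q.rep = 0 ∧ Q ≠ P ∧
        cubicDGrad P.rep 0 * Q.rep 0 + cubicDGrad P.rep 1 * Q.rep 1 +
          cubicDGrad P.rep 2 * Q.rep 2 = 0) := by
  -- characteristic 3
  have h3 : (3 : F) = 0 := by
    have hcp : CharP F (ringChar F) := ringChar.charP F
    have hp : (ringChar F).Prime := CharP.char_is_prime F (ringChar F)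
    obtain ⟨n, hn, hcard⟩ := FiniteField.card F (ringChar F)
    have hdvd : 3 ∣ ringChar F ^ (n : ℕ) := by
      rw [← hcard]; exact Nat.dvd_of_mod_eq_zero hq
    have h3p : 3 ∣ ringChar F := Nat.Prime.dvd_of_dvd_pow (by norm_num) hdvd
    have : ringChar F = 3 := ((Nat.prime_dvd_prime_iff_eq (by norm_num) hp).1 h3p).symm
    rw [this] at hcp
    exact CharP.cast_eq_zero F 3
  -- mem_iff restated as a set identity
  have hset : {P : Projectivization F (Fin 3 → F) | cubicD P.rep = 0}
      = insert (cuspPt F) (Set.range fpt) := by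
    ext P
    simp only [Set.mem_setOf_eq, Set.mem_insert_iff, Set.mem_range]
    rw [mem_iff]
    tauto
  refine ⟨?_, ⟨cusp_on, ?_, ?_⟩, ?_⟩
  · -- counting
    rw [hset, Set.ncard_insert_of_notMem (by rintro ⟨t, ht⟩; exact fpt_ne_cusp t ht),
      ← Set.image_univ, Set.ncard_image_of_injective _ fpt_inj, Set.ncard_univ,
      Nat.card_eq_fintype_card, add_comm]
  · -- gradient vanishes at cusp
    obtain ⟨c, hc, hrep⟩ := cusp_rep (F := F)
    rw [hrep]
    funext i; fin_cases i <;> simp [cubicDGrad]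
  · -- lines through the cusp
    intro L hL hmem
    obtain ⟨c, hc, hrep⟩ := cusp_rep (F := F)
    have he0 : (![1, 0, 0] : Fin 3 → F) ∈ L := by
      have := L.smul_mem c⁻¹ (hrep ▸ hmem)
      rwa [inv_smul_smul₀ hc] at this
    haveI : Finite (Projectivization F (Fin 3 → F)) := Quotient.finite _
    rw [Set.ncard_le_one_iff (Set.toFinite _)]
    rintro P Q ⟨hPD, hPne, hPL⟩ ⟨hQD, hQne, hQL⟩
    obtain (h | ⟨s, rfl⟩) := (mem_iff P).1 hPD
    · exact absurd h hPne
    obtain (h | ⟨t, rfl⟩) := (mem_iff Q).1 hQD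
    · exact absurd h hQne
    -- reduce rep membership to canonical vector membership
    have key : ∀ u : F, (fpt u).rep ∈ L → (![u^2+u^3, u, 1] : Fin 3 → F) ∈ L := by
      intro u hu
      obtain ⟨d, hd, hrepu⟩ := rep_eq_smul (fpt u) _ (vecne u) rfl
      have := L.smul_mem d⁻¹ (hrepu ▸ hu)
      rwa [inv_smul_smul₀ hd] at this
    have hs := key s hPL
    have ht := key t hQL
    by_cases hst : s = t
    · rw [hst]
    · exfalso
      -- L contains e0, e1, e2; contradiction with finrank = 2
      have hdiff : (![s^2+s^3, s, 1] : Fin 3 → F) - ![t^2+t^3, t, 1] ∈ L := L.sub_mem hs ht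
      have hsub2 : (![s^2+s^3, s, 1] : Fin 3 → F) - ![t^2+t^3, t, 1]
          - (s^2+s^3 - (t^2+t^3)) • ![1, 0, 0] = (s - t) • ![0, 1, 0] := by
        funext i; fin_cases i <;> simp
      have he1 : (![0, 1, 0] : Fin 3 → F) ∈ L := by
        have hm : (s - t) • (![0, 1, 0] : Fin 3 → F) ∈ L := by
          rw [← hsub2]; exact L.sub_mem hdiff (L.smul_mem _ he0)
        have := L.smul_mem (s - t)⁻¹ hm
        rwa [inv_smul_smul₀ (sub_ne_zero.2 hst)] at this
      have he2 : (![0, 0, 1] : Fin 3 → F) ∈ L := by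
        have hsub3 : (![s^2+s^3, s, 1] : Fin 3 → F) - (s^2+s^3) • ![1, 0, 0]
            - s • ![0, 1, 0] = ![0, 0, 1] := by
          funext i; fin_cases i <;> simp
        rw [← hsub3]
        exact L.sub_mem (L.sub_mem hs (L.smul_mem _ he0)) (L.smul_mem _ he1)
      have hLtop : L = ⊤ := by
        rw [Submodule.eq_top_iff']
        intro w
        have hw : w = w 0 • ![1, 0, 0] + w 1 • ![0, 1, 0] + w 2 • ![0, 0, 1] := by
          funext i; fin_cases i <;> simp
        rw [hw]
        exact L.add_mem (L.add_mem (L.smul_mem _ he0) (L.smul_mem _ he1)) (L.smul_mem _ he2)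
      rw [hLtop, finrank_top, Module.finrank_fin_fun] at hL
      norm_num at hL
  · -- no inflexion points
    intro P hPD hPne
    obtain (h | ⟨t, rfl⟩) := (mem_iff P).1 hPD
    · exact absurd h hPne
    refine ⟨fpt (t - 1), fpt_on _, ?_, ?_⟩
    · intro h
      exact one_ne_zero (sub_eq_self.1 (fpt_inj h))
    · obtain ⟨c, hc, hrepP⟩ := rep_eq_smul (fpt t) _ (vecne t) rfl
      obtain ⟨d, hd, hrepQ⟩ := rep_eq_smul (fpt (t - 1)) _ (vecne (t - 1)) rfl
      rw [hrepP, hrepQ]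
      simp only [cubicDGrad, Pi.smul_apply, smul_eq_mul]
      simp only [Matrix.cons_val_zero, Matrix.cons_val_one, Matrix.head_cons,
        Matrix.cons_val_two, Matrix.tail_cons]
      linear_combination (c^2 * d * t) * h3
end

section
/- Let q be even, Q(4,q) the parabolic quadric X₁X₅ + X₂X₄ + X₃² = 0 of PG(4,q) with nucleus N = (0,0,1,0,0), and Π a hyperplane not containing N. The projection from N onto Π maps the points of Q(4,q) bijectively onto the points of Π, and maps the lines contained in Q(4,q) to lines of Π that are totally isotropic for a nondegenerate alternating bilinear form on Π (i.e., the image is the point-line geometry of a symplectic space W(3,q)). -/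
open Projectivization

theorem nucleus_ne_zero {F : Type*} [Field F] :
    (![0, 0, 1, 0, 0] : Fin 5 → F) ≠ 0 := by
  intro h
  have := congrFun h 2
  simp at this

/-- The nucleus `N = (0,0,1,0,0)` of `Q(4,q)`. -/
noncomputable def nucleus (F : Type*) [Field F] : Projectivization F (Fin 5 → F) :=
  Projectivization.mk F ![0, 0, 1, 0, 0] nucleus_ne_zero

/-- The symplectic (polar) form of the quadric. -/
noncomputable def Bform (F : Type*) [Field F] : LinearMap.BilinForm F (Fin 5 → F) :=
  LinearMap.mk₂ F (fun u v => u 0 * v 4 + u 4 * v 0 + u 1 * v 3 + u 3 * v 1)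
    (by intros; simp; ring) (by intros; simp; ring)
    (by intros; simp; ring) (by intros; simp; ring)

lemma Bform_apply {F : Type*} [Field F] (u v : Fin 5 → F) :
    Bform F u v = u 0 * v 4 + u 4 * v 0 + u 1 * v 3 + u 3 * v 1 := rfl

lemma polar {F : Type*} [Field F] (h2 : (2:F) = 0) (u v : Fin 5 → F) :
    parQuad (u + v) = parQuad u + parQuad v + Bform F u v := by
  simp only [parQuad, Bform_apply, Pi.add_apply]
  linear_combination (u 2 * v 2) * h2

lemma parQuad_smul {F : Type*} [Field F] (c : F) (v : Fin 5 → F) :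
    parQuad (c • v) = c ^ 2 * parQuad v := by
  simp only [parQuad, Pi.smul_apply, smul_eq_mul]; ring

/-- for `q` even and a hyperplane `Π` of `PG(4,q)` not through
the nucleus `N`, projection from `N` maps the points of `Q(4,q)` bijectively
onto the points of `Π`, and maps the lines contained in `Q(4,q)` onto lines of
`Π` totally isotropic for a nondegenerate alternating bilinear form on `Π`
(the symplectic space `W(3,q)`). -/
theorem stmt19 (F : Type*) [Field F] [Fintype F] (hq : Even (Fintype.card F))
    (Pl : Submodule F (Fin 5 → F)) (hPl : Module.finrank F Pl = 4)
    (hN : (nucleus F).rep ∉ Pl) :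
    ∃ φ : {P : Projectivization F (Fin 5 → F) // parQuad P.rep = 0} →
        {P : Projectivization F (Fin 5 → F) // P.rep ∈ Pl},
      Function.Bijective φ ∧
      (∀ P, (φ P).1.rep ∈ Submodule.span F {(nucleus F).rep, P.1.rep}) ∧
      ∃ B : LinearMap.BilinForm F (Fin 5 → F),
        (∀ v ∈ Pl, B v v = 0) ∧
        (∀ v ∈ Pl, v ≠ 0 → ∃ w ∈ Pl, B v w ≠ 0) ∧
        ∀ L : Submodule F (Fin 5 → F), Module.finrank F L = 2 →
          (∀ v ∈ L, parQuad v = 0) →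
          ∃ L' : Submodule F (Fin 5 → F), Module.finrank F L' = 2 ∧ L' ≤ Pl ∧
            (∀ u ∈ L', ∀ v ∈ L', B u v = 0) ∧
            (∀ P : {P : Projectivization F (Fin 5 → F) // parQuad P.rep = 0},
              P.1.rep ∈ L ↔ (φ P).1.rep ∈ L') := by
  classical
  -- characteristic 2
  have hr2 : ringChar F = 2 := by
    obtain ⟨m, hp, hcard⟩ := FiniteField.card F (ringChar F)
    have h2p : 2 ∣ ringChar F :=
      Nat.Prime.dvd_of_dvd_pow Nat.prime_two (n := (m:ℕ)) (by rw [← hcard]; exact hq.two_dvd)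
    exact ((Nat.prime_dvd_prime_iff_eq Nat.prime_two hp).mp h2p).symm
  haveI hC2 : CharP F 2 := hr2 ▸ ringChar.charP F
  have h2 : (2:F) = 0 := by exact_mod_cast CharP.cast_eq_zero F 2
  haveI : Fact (Nat.Prime 2) := ⟨Nat.prime_two⟩
  have hsqrt : ∀ x : F, ∃ y : F, y ^ 2 = x := fun x => by
    obtain ⟨y, hy⟩ := surjective_frobenius F 2 x
    exact ⟨y, by rw [← hy, frobenius_def]⟩
  have hsqinj : ∀ x y : F, x ^ 2 = y ^ 2 → x = y := by
    intro x y h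
    have h4 : (x + y) ^ 2 = 0 := by linear_combination h + (x*y) * h2 + y^2 * h2
    have h5 : x + y = 0 := by
      have := sq_eq_zero_iff.mp h4
      exact this
    linear_combination h5 - y * h2
  -- the nucleus vector
  set n := (nucleus F).rep with hn
  have hn_ne : n ≠ 0 := (nucleus F).rep_nonzero
  obtain ⟨a, ha0'⟩ := exists_smul_eq_mk_rep F (![0,0,1,0,0] : Fin 5 → F) nucleus_ne_zero
  have ha0 : (a:F) ≠ 0 := a.ne_zero
  have hni : ∀ i, n i = (a:F) * (![0,0,1,0,0] : Fin 5 → F) i := by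
    intro i; rw [hn]; simp only [nucleus]; rw [← ha0']; rfl
  have hn0 : n 0 = 0 := by rw [hni]; simp
  have hn1 : n 1 = 0 := by rw [hni]; simp
  have hn2 : n 2 = (a:F) := by rw [hni]; simp
  have hn3 : n 3 = 0 := by rw [hni]; simp
  have hn4 : n 4 = 0 := by rw [hni]; simp
  have hpn : parQuad n = (a:F)^2 := by
    simp only [parQuad, hn0, hn1, hn2, hn3, hn4]; ring
  have hBn : ∀ v, Bform F v n = 0 := by
    intro v; rw [Bform_apply, hn0, hn1, hn3, hn4]; ring
  have hnB : ∀ v, Bform F n v = 0 := by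
    intro v; rw [Bform_apply, hn0, hn1, hn3, hn4]; ring
  have hkey : ∀ (v : Fin 5 → F) (t : F), parQuad (v + t • n) = parQuad v + t^2 * (a:F)^2 := by
    intro v t
    rw [polar h2, parQuad_smul, hpn]
    have hB : Bform F v (t • n) = 0 := by rw [map_smul, hBn, smul_zero]
    rw [hB, add_zero]
  have hsq0 : ∀ x : F, x^2 = 0 → x = 0 := fun x hx => sq_eq_zero_iff.mp hx
  have hzero : ∀ t : F, t^2 * (a:F)^2 = 0 → t = 0 := by
    intro t h
    rcases mul_eq_zero.mp h with h'|h'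
    · exact hsq0 _ h'
    · exact absurd (hsq0 _ h') ha0
  -- complement and projection
  have hdis : Disjoint Pl (Submodule.span F {n}) := by
    rw [Submodule.disjoint_def]
    intro x hxP hxn
    rw [Submodule.mem_span_singleton] at hxn
    obtain ⟨c, rfl⟩ := hxn
    rcases eq_or_ne c 0 with hc | hc
    · rw [hc, zero_smul]
    · exfalso
      apply hN
      have := Pl.smul_mem c⁻¹ hxP
      rwa [smul_smul, inv_mul_cancel₀ hc, one_smul] at this
  have hcod : Codisjoint Pl (Submodule.span F {n}) := by
    rw [codisjoint_iff]
    apply Submodule.eq_top_of_finrank_eq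
    have h5 : Module.finrank F (Fin 5 → F) = 5 := Module.finrank_fin_fun F
    have hsum := Submodule.finrank_sup_add_finrank_inf_eq Pl (Submodule.span F {n})
    have hinf : Pl ⊓ Submodule.span F {n} = ⊥ := disjoint_iff.mp hdis
    rw [hPl, finrank_span_singleton hn_ne, hinf, finrank_bot, add_zero] at hsum
    rw [h5, hsum]
  have hcompl : IsCompl Pl (Submodule.span F {n}) := ⟨hdis, hcod⟩
  let pr0 : (Fin 5 → F) →ₗ[F] Pl := Submodule.linearProjOfIsCompl Pl (Submodule.span F {n}) hcompl
  let prl : (Fin 5 → F) →ₗ[F] (Fin 5 → F) := Pl.subtype ∘ₗ pr0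
  have hpr_mem : ∀ v, prl v ∈ Pl := fun v => (pr0 v).2
  have hpr_left : ∀ v, v ∈ Pl → prl v = v := fun v hv =>
    congrArg Subtype.val (Submodule.linearProjOfIsCompl_apply_left hcompl ⟨v, hv⟩)
  have hpr_n : prl n = 0 := by
    have h := Submodule.linearProjOfIsCompl_apply_right' hcompl
      (Submodule.mem_span_singleton_self n)
    have : prl n = ((0:Pl) : Fin 5 → F) := congrArg Subtype.val h
    simpa using this
  have hdecomp : ∀ v : Fin 5 → F, ∃ t : F, v = prl v + t • n := by
    intro v
    have hker : v - prl v ∈ LinearMap.ker pr0 := by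
      rw [LinearMap.mem_ker, map_sub]
      have h2' : pr0 (prl v) = pr0 v :=
        Submodule.linearProjOfIsCompl_apply_left hcompl (pr0 v)
      rw [h2', sub_self]
    have hker_eq : LinearMap.ker pr0 = Submodule.span F {n} :=
      Submodule.linearProjOfIsCompl_ker hcompl
    rw [hker_eq, Submodule.mem_span_singleton] at hker
    obtain ⟨t, ht⟩ := hker
    exact ⟨t, by rw [ht]; abel⟩
  -- projection of quadric points is nonzero
  have hprl_ne : ∀ v : Fin 5 → F, v ≠ 0 → parQuad v = 0 → prl v ≠ 0 := by
    intro v hv hq0 hc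
    obtain ⟨t, ht⟩ := hdecomp v
    rw [hc, zero_add] at ht
    have hqt : parQuad v = t^2 * (a:F)^2 := by rw [ht, parQuad_smul, hpn]
    rw [hq0] at hqt
    have ht0 : t = 0 := hzero t hqt.symm
    exact hv (by rw [ht, ht0, zero_smul])
  have hrep_smul : ∀ (x : Fin 5 → F) (hx : x ≠ 0),
      ∃ c : Fˣ, (Projectivization.mk F x hx).rep = (c:F) • x := by
    intro x hx
    obtain ⟨c, hc⟩ := exists_smul_eq_mk_rep F x hx
    exact ⟨c, by rw [← hc]; rfl⟩
  -- the projection map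
  let φ : {P : Projectivization F (Fin 5 → F) // parQuad P.rep = 0} →
      {P : Projectivization F (Fin 5 → F) // P.rep ∈ Pl} :=
    fun P => ⟨Projectivization.mk F (prl P.1.rep) (hprl_ne _ P.1.rep_nonzero P.2), by
      obtain ⟨c, hc⟩ := hrep_smul (prl P.1.rep) (hprl_ne _ P.1.rep_nonzero P.2)
      rw [hc]; exact Pl.smul_mem _ (hpr_mem _)⟩
  have hφ1 : ∀ P, (φ P).1 = Projectivization.mk F (prl P.1.rep)
      (hprl_ne _ P.1.rep_nonzero P.2) := fun P => rfl
  refine ⟨φ, ⟨?_, ?_⟩, ?_, Bform F, ?_, ?_, ?_⟩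
  · -- injective
    intro P P' hPP
    have hmk : Projectivization.mk F (prl P.1.rep) (hprl_ne _ P.1.rep_nonzero P.2)
        = Projectivization.mk F (prl P'.1.rep) (hprl_ne _ P'.1.rep_nonzero P'.2) :=
      congrArg Subtype.val hPP
    rw [Projectivization.mk_eq_mk_iff] at hmk
    obtain ⟨c, hc⟩ := hmk
    rw [Units.smul_def] at hc
    obtain ⟨t, ht⟩ := hdecomp P.1.rep
    obtain ⟨t', ht'⟩ := hdecomp P'.1.rep
    have hqv : parQuad (prl P.1.rep) = t^2 * (a:F)^2 := by
      have hk := hkey (prl P.1.rep) t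
      rw [← ht, P.2] at hk
      linear_combination -hk - t^2*(a:F)^2*h2
    have hqv' : parQuad (prl P'.1.rep) = t'^2 * (a:F)^2 := by
      have hk := hkey (prl P'.1.rep) t'
      rw [← ht', P'.2] at hk
      linear_combination -hk - t'^2*(a:F)^2*h2
    rw [← hc, parQuad_smul, hqv'] at hqv
    have hsq : (t*(a:F))^2 = ((c:F)*t'*(a:F))^2 := by linear_combination -hqv
    have hta := hsqinj _ _ hsq
    have htt : t = (c:F) * t' := mul_right_cancel₀ ha0 hta
    have hv_eq : P.1.rep = (c:F) • P'.1.rep := by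
      rw [ht, ht', htt, ← hc]
      module
    apply Subtype.ext
    rw [← Projectivization.mk_rep P.1, ← Projectivization.mk_rep P'.1]
    rw [Projectivization.mk_eq_mk_iff']
    exact ⟨c, hv_eq.symm⟩
  · -- surjective
    intro Q0
    have hwP : Q0.1.rep ∈ Pl := Q0.2
    have hw0 : Q0.1.rep ≠ 0 := Q0.1.rep_nonzero
    obtain ⟨y, hy⟩ := hsqrt (parQuad Q0.1.rep)
    set t : F := y * (a:F)⁻¹ with htdef
    set v : Fin 5 → F := Q0.1.rep + t • n with hvdef
    have hqv : parQuad v = 0 := by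
      rw [hvdef, hkey]
      have hta : t^2 * (a:F)^2 = y^2 := by
        rw [htdef]; field_simp
      rw [hta, hy]
      linear_combination parQuad Q0.1.rep * h2
    have hprv : prl v = Q0.1.rep := by
      rw [hvdef, map_add, map_smul, hpr_n, hpr_left _ hwP, smul_zero, add_zero]
    have hv0 : v ≠ 0 := fun h => hw0 (by rw [← hprv, h, map_zero])
    refine ⟨⟨Projectivization.mk F v hv0, ?_⟩, ?_⟩
    · obtain ⟨c, hc⟩ := hrep_smul v hv0
      rw [hc, parQuad_smul, hqv, mul_zero]
    · apply Subtype.ext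
      rw [hφ1]
      obtain ⟨c, hc⟩ := hrep_smul v hv0
      have hpc : prl ((Projectivization.mk F v hv0).rep) = (c:F) • Q0.1.rep := by
        rw [hc, map_smul, hprv]
      conv_rhs => rw [← Projectivization.mk_rep Q0.1]
      rw [Projectivization.mk_eq_mk_iff']
      exact ⟨c, hpc.symm⟩
  · -- span condition
    intro P
    obtain ⟨c, hc⟩ := hrep_smul (prl P.1.rep) (hprl_ne _ P.1.rep_nonzero P.2)
    have hφrep : (φ P).1.rep = (c:F) • prl P.1.rep := hc
    rw [hφrep, Submodule.mem_span_pair]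
    obtain ⟨t, ht⟩ := hdecomp P.1.rep
    refine ⟨-((c:F) * t), (c:F), ?_⟩
    conv_lhs => rw [ht]
    have : prl P.1.rep = P.1.rep - t • n := eq_sub_of_add_eq ht.symm
    rw [this]
    module
  · -- alternating
    intro v _
    rw [Bform_apply]
    linear_combination (v 0 * v 4 + v 1 * v 3) * h2
  · -- nondegenerate on Pl
    intro v hvP hv0
    have hB : ∀ j : Fin 5, ∃ w ∈ Pl, Bform F v w = Bform F v (Pi.single j 1) := by
      intro j
      obtain ⟨t, ht⟩ := hdecomp (Pi.single j 1)
      refine ⟨prl (Pi.single j 1), hpr_mem _, ?_⟩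
      have hd : Bform F v (Pi.single j 1)
          = Bform F v (prl (Pi.single j 1)) + t * Bform F v n := by
        conv_lhs => rw [ht]
        rw [map_add, map_smul, smul_eq_mul]
      rw [hd, hBn, mul_zero, add_zero]
    rcases ne_or_eq (v 0) 0 with h|h0
    · obtain ⟨w, hwP, hw⟩ := hB 4
      exact ⟨w, hwP, by rw [hw, Bform_apply]; simpa [Pi.single_apply] using h⟩
    rcases ne_or_eq (v 4) 0 with h|h4
    · obtain ⟨w, hwP, hw⟩ := hB 0
      exact ⟨w, hwP, by rw [hw, Bform_apply]; simpa [Pi.single_apply] using h⟩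
    rcases ne_or_eq (v 1) 0 with h|h1
    · obtain ⟨w, hwP, hw⟩ := hB 3
      exact ⟨w, hwP, by rw [hw, Bform_apply]; simpa [Pi.single_apply] using h⟩
    rcases ne_or_eq (v 3) 0 with h|h3
    · obtain ⟨w, hwP, hw⟩ := hB 1
      exact ⟨w, hwP, by rw [hw, Bform_apply]; simpa [Pi.single_apply] using h⟩
    · exfalso
      have hvspan : v ∈ Submodule.span F {n} := by
        rw [Submodule.mem_span_singleton]
        refine ⟨v 2 * (a:F)⁻¹, ?_⟩
        funext i
        rw [Pi.smul_apply, smul_eq_mul, hni i]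
        fin_cases i
        · simpa using h0.symm
        · simpa using h1.symm
        · field_simp; exact mul_one _
        · simpa using h3.symm
        · simpa using h4.symm
      exact hv0 (Submodule.disjoint_def.mp hdis v hvP hvspan)
  · -- lines
    intro L hL2 hLq
    refine ⟨L.map prl, ?_, ?_, ?_, ?_⟩
    · -- finrank 2
      have hker : ∀ x : Fin 5 → F, x ∈ L → prl x = 0 → x = 0 := by
        intro x hxL hx0
        obtain ⟨t, ht⟩ := hdecomp x
        rw [hx0, zero_add] at ht
        have hqx : parQuad x = 0 := hLq x hxL
        rw [ht, parQuad_smul, hpn] at hqx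
        rw [ht, hzero t hqx, zero_smul]
      let f := prl.comp L.subtype
      have hrange : LinearMap.range f = L.map prl := by
        rw [LinearMap.range_comp, Submodule.range_subtype]
      have hkf : LinearMap.ker f = ⊥ := by
        rw [LinearMap.ker_eq_bot']
        intro x hx
        exact Subtype.ext (hker x x.2 hx)
      have hrk := LinearMap.finrank_range_add_finrank_ker f
      rw [hrange, hkf, finrank_bot, add_zero, hL2] at hrk
      exact hrk
    · -- ≤ Pl
      intro x hx
      rw [Submodule.mem_map] at hx
      obtain ⟨u, hu, rfl⟩ := hx
      exact hpr_mem u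
    · -- totally isotropic
      intro x hx y hy
      rw [Submodule.mem_map] at hx hy
      obtain ⟨u, hu, rfl⟩ := hx
      obtain ⟨w, hw, rfl⟩ := hy
      obtain ⟨t, ht⟩ := hdecomp u
      obtain ⟨s, hs⟩ := hdecomp w
      have hBuw : Bform F u w = 0 := by
        have h1 : parQuad (u + w) = 0 := hLq _ (L.add_mem hu hw)
        have hpo := polar h2 u w
        rw [hLq u hu, hLq w hw, h1] at hpo
        simpa using hpo.symm
      have e1 : Bform F (u - t • n) (w - s • n)
          = Bform F u w - s • Bform F u n - t • Bform F n w + (t*s) • Bform F n n := by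
        simp only [map_sub, map_smul, LinearMap.sub_apply, LinearMap.smul_apply, smul_eq_mul]
        ring
      rw [eq_sub_of_add_eq ht.symm, eq_sub_of_add_eq hs.symm, e1, hBn, hnB, hBn, hBuw]
      simp
    · -- point correspondence
      intro P
      obtain ⟨c, hc⟩ := hrep_smul (prl P.1.rep) (hprl_ne _ P.1.rep_nonzero P.2)
      have hφrep : (φ P).1.rep = (c:F) • prl P.1.rep := hc
      constructor
      · intro hmem
        rw [hφrep]
        exact Submodule.smul_mem _ _ (Submodule.mem_map_of_mem hmem)
      · intro hmem
        rw [hφrep] at hmem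
        have hmem' : prl P.1.rep ∈ L.map prl := by
          have hh := Submodule.smul_mem _ ((c:F)⁻¹) hmem
          rwa [smul_smul, inv_mul_cancel₀ c.ne_zero, one_smul] at hh
        rw [Submodule.mem_map] at hmem'
        obtain ⟨u, huL, hu⟩ := hmem'
        obtain ⟨t, ht⟩ := hdecomp P.1.rep
        obtain ⟨s, hs⟩ := hdecomp u
        have hveq : P.1.rep = u + (t - s) • n := by
          have huu : u + (t - s) • n = prl u + t • n := by
            conv_lhs => rw [hs]
            module
          rw [huu, hu, ← ht]
        have hq0 : parQuad P.1.rep = 0 := P.2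
        rw [hveq, hkey, hLq u huL, zero_add] at hq0
        rw [hveq, hzero _ hq0, zero_smul, add_zero]
        exact huL
end
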